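/- arXiv:2305.02925 — 11 statements merged into one kernel-verified Lean document; each statement's English description precedes it below -/
import Mathlib

section
/- Let MT be a connected molecular tree of order n with n ≥ 5. Then SO₆(MT) ≤ π·[ (g(1,4)+g(2,4))·n/2 + (3g(1,4)−5g(2,4))/2 ] if n ≡ 1 (mod 4); SO₆(MT) ≤ π·[ (g(1,4)+g(2,4))·n/2 + 2g(1,4) − 5g(2,4) + g(3,4) ] if n ≡ 2 (mod 4); SO₆(MT) ≤ π·[ (g(1,4)+g(2,4))·n/2 + (5g(1,4)−11g(2,4))/2 ] if n ≡ 3 (mod 4); and SO₆(MT) ≤ π·[ (g(1,4)+g(2,4))·n/2 + 2g(1,4) − 4g(2,4) ] if n ≡ 0 (mod 4). -/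
/-- `f a b = |a² − b²| / (√2 + 2√(a² + b²))`. -/
noncomputable def f (a b : ℝ) : ℝ :=
  |a ^ 2 - b ^ 2| / (Real.sqrt 2 + 2 * Real.sqrt (a ^ 2 + b ^ 2))

/-- `g a b = f(a,b)²`. -/
noncomputable def g (a b : ℝ) : ℝ := (f a b) ^ 2

theorem g_symm (a b : ℝ) : g a b = g b a := by
  unfold g f; rw [abs_sub_comm, add_comm (a ^ 2)]

/-- The Sombor-index-like invariant `SO₆(G) = π · Σ_{uv ∈ E(G)} g(d(u), d(v))`. -/
noncomputable def SO6 {V : Type*} [Fintype V] [DecidableEq V] (G : SimpleGraph V)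
    [DecidableRel G.Adj] : ℝ :=
  Real.pi * ∑ e ∈ G.edgeFinset,
    Sym2.lift ⟨fun u v => g (G.degree u) (G.degree v),
      fun u v => g_symm (G.degree u) (G.degree v)⟩ e

/-!
Give each end of an edge the weight `C / d`, where `d` is the degree of that end, and each edge
the extra weight `β`, with `C = 2 (g(1,4) - g(2,4))` and `β = (5 g(2,4) - 3 g(1,4)) / 2`. Every
vertex of positive degree then carries total weight `C`, so the weights of a tree of order `n`
add up to `C n + β (n - 1)`, the bound for `n ≡ 1 (mod 4)`. For all degrees `i, j ≤ 4` the
weight `C / i + C / j + β` of an `(i, j)`-edge is at least `g(i, j)`, with equality for the types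
`(1,4)` and `(2,4)` only, so `SO₆` is `π` times that total minus the sum of these slacks.

For the other residues, a vertex of degree `3` or an edge with both ends of degree at most `2`
already contributes enough slack. Otherwise every edge has type `(1,4)`, `(2,4)` or `(4,4)`;
counting ends of degree `4` shows that the number of `(4,4)`-edges is `4 n₄ - (n - 1)`, hence at
least the residue of `1 - n` modulo `4`, and each of them has slack `(3 g(2,4) - g(1,4)) / 2`.
-/

open Finset

theorem g_self (a : ℝ) : g a a = 0 := by
  simp [g, f]

theorem g_eq_div (a b : ℝ) :
    g a b = (a ^ 2 - b ^ 2) ^ 2 / (√2 + 2 * √(a ^ 2 + b ^ 2)) ^ 2 := by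
  rw [g, f, div_pow, sq_abs]

theorem g_le_of_sq_le {a b r t c : ℝ} (hr : 0 < r) (hr2 : r ^ 2 ≤ 2) (ht : 0 ≤ t)
    (ht2 : t ^ 2 ≤ a ^ 2 + b ^ 2) (hc : (a ^ 2 - b ^ 2) ^ 2 ≤ c * (r + 2 * t) ^ 2) :
    g a b ≤ c := by
  have hr' : r ≤ √2 := Real.le_sqrt_of_sq_le hr2
  have ht' : t ≤ √(a ^ 2 + b ^ 2) := Real.le_sqrt_of_sq_le ht2
  calc g a b ≤ (a ^ 2 - b ^ 2) ^ 2 / (r + 2 * t) ^ 2 := by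
        rw [g_eq_div]; gcongr
    _ ≤ c := (div_le_iff₀ (by positivity)).2 hc

theorem le_g_of_le_sq {a b r t c : ℝ} (hr : 0 ≤ r) (hr2 : 2 ≤ r ^ 2) (ht : 0 ≤ t)
    (ht2 : a ^ 2 + b ^ 2 ≤ t ^ 2) (hc : c * (r + 2 * t) ^ 2 ≤ (a ^ 2 - b ^ 2) ^ 2) :
    c ≤ g a b := by
  have hr' : √2 ≤ r := Real.sqrt_le_iff.2 ⟨hr, hr2⟩
  have ht' : √(a ^ 2 + b ^ 2) ≤ t := Real.sqrt_le_iff.2 ⟨ht, ht2⟩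
  have hr0 : 0 < r := (Real.sqrt_pos.2 two_pos).trans_le hr'
  calc c ≤ (a ^ 2 - b ^ 2) ^ 2 / (r + 2 * t) ^ 2 := (le_div_iff₀ (by positivity)).2 hc
    _ ≤ g a b := by rw [g_eq_div]; gcongr

theorem g_bounds :
    g 1 2 ≤ 0.26 ∧ g 1 3 ≤ 1.069 ∧ g 2 3 ≤ 0.337 ∧ 2.41 ≤ g 1 4 ∧ g 1 4 ≤ 2.411 ∧
      1.341 ≤ g 2 4 ∧ g 2 4 ≤ 1.343 ∧ 0.376 ≤ g 3 4 ∧ g 3 4 ≤ 0.377 := by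
  refine ⟨?_, ?_, ?_, ?_, ?_, ?_, ?_, ?_, ?_⟩
  · apply g_le_of_sq_le (r := 1.4142) (t := 2.236) <;> norm_num
  · apply g_le_of_sq_le (r := 1.4142) (t := 3.1622) <;> norm_num
  · apply g_le_of_sq_le (r := 1.4142) (t := 3.6055) <;> norm_num
  · apply le_g_of_le_sq (r := 1.4143) (t := 4.1232) <;> norm_num
  · apply g_le_of_sq_le (r := 1.4142) (t := 4.1231) <;> norm_num
  · apply le_g_of_le_sq (r := 1.4143) (t := 4.4722) <;> norm_num
  · apply g_le_of_sq_le (r := 1.4142) (t := 4.4721) <;> norm_num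
  · apply le_g_of_le_sq (r := 1.4143) (t := 5) <;> norm_num
  · apply g_le_of_sq_le (r := 1.4142) (t := 5) <;> norm_num

noncomputable def slack (a b : ℝ) : ℝ :=
  2 * (g 1 4 - g 2 4) * (1 / a + 1 / b) + (5 * g 2 4 - 3 * g 1 4) / 2 - g a b

theorem slack_comm (a b : ℝ) : slack a b = slack b a := by
  rw [slack, slack, g_symm a, add_comm (1 / a)]

theorem slack_four_four : slack 4 4 = (3 * g 2 4 - g 1 4) / 2 := by
  rw [slack, g_self]; ring

theorem slack_nonneg {i j : ℕ} (hi : i ∈ Icc 1 4) (hj : j ∈ Icc 1 4) : 0 ≤ slack i j := by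
  obtain ⟨_, _, _, _, _, _, _, _, _⟩ := g_bounds
  rw [mem_Icc] at hi hj
  obtain ⟨hi1, hi4⟩ := hi
  obtain ⟨hj1, hj4⟩ := hj
  interval_cases i <;> interval_cases j <;>
    norm_num [slack, g_self, g_symm 2 1, g_symm 3 1, g_symm 4 1, g_symm 3 2, g_symm 4 2,
      g_symm 4 3] <;> linarith

theorem slack_three_four_le {j : ℕ} (hj : j ∈ Icc 1 4) : slack 3 4 ≤ slack 3 j := by
  obtain ⟨_, _, _, _, _, _, _, _, _⟩ := g_bounds
  rw [mem_Icc] at hj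
  obtain ⟨hj1, hj4⟩ := hj
  interval_cases j <;> norm_num [slack, g_self, g_symm 3 1, g_symm 3 2] <;> linarith

theorem le_slack_of_le_two {i j : ℕ} (hi : i ∈ Icc 1 2) (hj : j ∈ Icc 1 2) :
    (5 * g 2 4 - g 1 4) / 2 - g 3 4 ≤ slack i j := by
  obtain ⟨_, _, _, _, _, _, _, _, _⟩ := g_bounds
  rw [mem_Icc] at hi hj
  obtain ⟨hi1, hi4⟩ := hi
  obtain ⟨hj1, hj4⟩ := hj
  interval_cases i <;> interval_cases j <;> norm_num [slack, g_self, g_symm 2 1] <;> linarith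

theorem le_three_mul_slack_three_four : (5 * g 2 4 - g 1 4) / 2 - g 3 4 ≤ 3 * slack 3 4 := by
  obtain ⟨_, _, _, _, _, _, _, _, _⟩ := g_bounds
  norm_num [slack]; linarith

theorem two_mul_slack_four_four_le : 2 * slack 4 4 ≤ (5 * g 2 4 - g 1 4) / 2 - g 3 4 := by
  obtain ⟨_, _, _, _, _, _, _, _, _⟩ := g_bounds
  rw [slack_four_four]; linarith

theorem le_three_mul_slack_four_four : (5 * g 2 4 - g 1 4) / 2 - g 3 4 ≤ 3 * slack 4 4 := by
  obtain ⟨_, _, _, _, _, _, _, _, _⟩ := g_bounds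
  rw [slack_four_four]; linarith

theorem slack_four_four_pos : 0 < slack 4 4 := by
  obtain ⟨_, _, _, _, _, _, _, _, _⟩ := g_bounds
  rw [slack_four_four]; linarith

theorem slack_eq_of_four {i j : ℕ} (hi : i ∈ ({1, 2, 4} : Finset ℕ))
    (hj : j ∈ ({1, 2, 4} : Finset ℕ)) (h : i = 4 ∨ j = 4) :
    slack i j = slack 4 4 * ((if i = 4 then 1 else 0) + (if j = 4 then 1 else 0) - 1) := by
  simp only [mem_insert, mem_singleton] at hi hj
  rcases hi with rfl | rfl | rfl <;> rcases hj with rfl | rfl | rfl <;> first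
    | omega
    | norm_num [slack, g_self, g_symm 4 1, g_symm 4 2] <;> ring

namespace SimpleGraph

variable {V : Type*} [Fintype V] (G : SimpleGraph V) [DecidableRel G.Adj]

theorem sum_edgeFinset_lift_add [DecidableEq V] {M : Type*} [AddCommMonoid M] (h : V → M) :
    ∑ e ∈ G.edgeFinset, Sym2.lift ⟨fun u w => h u + h w, fun _ _ => add_comm _ _⟩ e =
      ∑ v, G.degree v • h v := by
  calc ∑ e ∈ G.edgeFinset, Sym2.lift ⟨fun u w => h u + h w, fun _ _ => add_comm _ _⟩ e
      = ∑ e ∈ G.edgeFinset, ∑ v with v ∈ e, h v := by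
        refine sum_congr rfl fun e he => ?_
        induction e using Sym2.ind with
        | _ u w =>
          have huw : u ≠ w := (mem_edgeFinset.1 he).ne
          change h u + h w = _
          rw [← sum_pair huw]
          congr 1
          ext v
          simp
    _ = ∑ v, ∑ e ∈ G.incidenceFinset v, h v := by
        refine sum_comm' fun e v => ?_
        simp [incidenceFinset_eq_filter, and_comm]
    _ = ∑ v, G.degree v • h v := by simp

noncomputable def edgeSlack (e : Sym2 V) : ℝ :=
  Sym2.lift ⟨fun u w => slack (G.degree u) (G.degree w), fun _ _ => slack_comm _ _⟩ e

theorem edgeSlack_mk (u w : V) : G.edgeSlack s(u, w) = slack (G.degree u) (G.degree w) := rfl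

theorem SO6_eq_sub_sum_edgeSlack [DecidableEq V] (hpos : ∀ v, 0 < G.degree v) :
    SO6 G = Real.pi * (2 * (g 1 4 - g 2 4) * Fintype.card V +
      (5 * g 2 4 - 3 * g 1 4) / 2 * #G.edgeFinset - ∑ e ∈ G.edgeFinset, G.edgeSlack e) := by
  set pot : V → ℝ := fun v => 2 * (g 1 4 - g 2 4) / G.degree v
  have hedge : ∀ e ∈ G.edgeFinset,
      Sym2.lift ⟨fun u v => g (G.degree u) (G.degree v),
        fun u v => g_symm (G.degree u) (G.degree v)⟩ e =
      Sym2.lift ⟨fun u w => pot u + pot w, fun _ _ => add_comm _ _⟩ e +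
        (5 * g 2 4 - 3 * g 1 4) / 2 - G.edgeSlack e := by
    intro e _
    induction e using Sym2.ind with
    | _ u w => simp only [Sym2.lift_mk, edgeSlack_mk, slack, pot]; ring
  have hvert : ∀ v, G.degree v • pot v = 2 * (g 1 4 - g 2 4) := fun v => by
    have : (G.degree v : ℝ) ≠ 0 := by exact_mod_cast (hpos v).ne'
    simp only [pot, nsmul_eq_mul]; field_simp
  rw [SO6, sum_congr rfl hedge, sum_sub_distrib, sum_add_distrib, sum_edgeFinset_lift_add,
    sum_congr rfl fun v _ => hvert v]
  simp only [sum_const, card_univ, nsmul_eq_mul]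
  ring

variable {G}

theorem edgeSlack_nonneg (hdeg : ∀ v, G.degree v ∈ Icc 1 4) (e : Sym2 V) :
    0 ≤ G.edgeSlack e := by
  induction e using Sym2.ind with
  | _ u w => exact slack_nonneg (hdeg u) (hdeg w)

theorem three_mul_slack_three_four_le_sum [DecidableEq V] (hdeg : ∀ v, G.degree v ∈ Icc 1 4)
    {v : V} (hv : G.degree v = 3) :
    3 * slack 3 4 ≤ ∑ e ∈ G.edgeFinset, G.edgeSlack e := by
  have hinc : ∀ e ∈ G.incidenceFinset v, slack 3 4 ≤ G.edgeSlack e := by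
    intro e he
    induction e using Sym2.ind with
    | _ x y =>
      rw [mem_incidenceFinset, mk'_mem_incidenceSet_iff] at he
      rcases he.2 with rfl | rfl
      · simpa [edgeSlack_mk, hv] using slack_three_four_le (hdeg y)
      · simpa [edgeSlack_mk, hv, slack_comm _ (3 : ℝ)] using slack_three_four_le (hdeg x)
  calc 3 * slack 3 4 = ∑ e ∈ G.incidenceFinset v, slack 3 4 := by
        rw [sum_const, card_incidenceFinset_eq_degree, hv, nsmul_eq_mul, Nat.cast_ofNat]
    _ ≤ ∑ e ∈ G.incidenceFinset v, G.edgeSlack e := sum_le_sum hinc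
    _ ≤ ∑ e ∈ G.edgeFinset, G.edgeSlack e :=
        sum_le_sum_of_subset_of_nonneg (incidenceFinset_subset G v)
          fun e _ _ => edgeSlack_nonneg hdeg e

theorem sum_edgeSlack_eq_of_adj_four [DecidableEq V]
    (hdeg : ∀ v, G.degree v ∈ ({1, 2, 4} : Finset ℕ))
    (hadj : ∀ u w, G.Adj u w → G.degree u = 4 ∨ G.degree w = 4) :
    ∑ e ∈ G.edgeFinset, G.edgeSlack e =
      slack 4 4 * (4 * #{v | G.degree v = 4} - #G.edgeFinset) := by
  set pot : V → ℝ := fun v => if G.degree v = 4 then slack 4 4 else 0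
  have hedge : ∀ e ∈ G.edgeFinset, G.edgeSlack e =
      Sym2.lift ⟨fun u w => pot u + pot w, fun _ _ => add_comm _ _⟩ e - slack 4 4 := by
    intro e he
    induction e using Sym2.ind with
    | _ u w =>
      rw [edgeSlack_mk, slack_eq_of_four (hdeg u) (hdeg w) (hadj u w (mem_edgeFinset.1 he))]
      simp only [Sym2.lift_mk, pot]
      split_ifs <;> ring
  have hvert : ∀ v, G.degree v • pot v = if G.degree v = 4 then 4 * slack 4 4 else 0 := by
    intro v
    simp only [pot]
    split_ifs with hv <;> simp [hv]
  rw [sum_congr rfl hedge, sum_sub_distrib, sum_edgeFinset_lift_add,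
    sum_congr rfl fun v _ => hvert v, ← sum_filter, sum_const, sum_const, nsmul_eq_mul,
    nsmul_eq_mul]
  ring

theorem le_sum_edgeSlack_or_exists_eq_mul [DecidableEq V] (hdeg : ∀ v, G.degree v ∈ Icc 1 4) :
    (5 * g 2 4 - g 1 4) / 2 - g 3 4 ≤ ∑ e ∈ G.edgeFinset, G.edgeSlack e ∨
      ∃ m : ℕ, ∑ e ∈ G.edgeFinset, G.edgeSlack e = slack 4 4 * m ∧
        (m + #G.edgeFinset) % 4 = 0 := by
  have hS : ∀ e ∈ G.edgeFinset, 0 ≤ G.edgeSlack e := fun e _ => edgeSlack_nonneg hdeg e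
  by_cases h3 : ∃ v, G.degree v = 3
  · obtain ⟨v, hv⟩ := h3
    exact Or.inl (le_three_mul_slack_three_four.trans (three_mul_slack_three_four_le_sum hdeg hv))
  push Not at h3
  have hdeg12 : ∀ v, G.degree v ≠ 4 → G.degree v ∈ Icc 1 2 := fun v hv4 => by
    have := mem_Icc.1 (hdeg v)
    have := h3 v
    exact mem_Icc.2 ⟨by omega, by omega⟩
  by_cases hlow : ∃ u w, G.Adj u w ∧ G.degree u ≠ 4 ∧ G.degree w ≠ 4
  · obtain ⟨u, w, huw, hu, hw⟩ := hlow
    left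
    calc _ ≤ G.edgeSlack s(u, w) := le_slack_of_le_two (hdeg12 u hu) (hdeg12 w hw)
      _ ≤ ∑ e ∈ G.edgeFinset, G.edgeSlack e := single_le_sum hS (mem_edgeFinset.2 huw)
  push Not at hlow
  right
  have hdeg124 : ∀ v, G.degree v ∈ ({1, 2, 4} : Finset ℕ) := fun v => by
    by_cases hv : G.degree v = 4
    · simp [hv]
    · have := mem_Icc.1 (hdeg12 v hv)
      simp only [mem_insert, mem_singleton]
      omega
  have hsum := sum_edgeSlack_eq_of_adj_four hdeg124
    fun u w huw => or_iff_not_imp_left.2 (hlow u w huw)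
  have hle : #G.edgeFinset ≤ 4 * #{v | G.degree v = 4} := by
    have h0 := sum_nonneg hS
    rw [hsum] at h0
    exact_mod_cast le_of_sub_nonneg (nonneg_of_mul_nonneg_right h0 slack_four_four_pos)
  refine ⟨4 * #{v | G.degree v = 4} - #G.edgeFinset, ?_, by omega⟩
  rw [hsum, Nat.cast_sub hle]
  push_cast
  ring

end SimpleGraph

theorem lower_bounds_of_mod_four {S : ℝ} {n : ℕ}
    (h : (5 * g 2 4 - g 1 4) / 2 - g 3 4 ≤ S ∨
      ∃ m : ℕ, S = slack 4 4 * m ∧ (m + n) % 4 = 1) :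
    (n % 4 = 2 → (5 * g 2 4 - g 1 4) / 2 - g 3 4 ≤ S) ∧
      (n % 4 = 3 → 2 * slack 4 4 ≤ S) ∧ (n % 4 = 0 → slack 4 4 ≤ S) := by
  have h44 := slack_four_four_pos
  rcases h with h | ⟨m, rfl, hm⟩
  · have := two_mul_slack_four_four_le
    exact ⟨fun _ => h, fun _ => by linarith, fun _ => by linarith⟩
  have hm' : ∀ k : ℕ, k ≤ m → slack 4 4 * k ≤ slack 4 4 * m := fun k hk =>
    mul_le_mul_of_nonneg_left (by exact_mod_cast hk) h44.le
  refine ⟨fun hn => ?_, fun hn => ?_, fun hn => ?_⟩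
  · have h3 := hm' 3 (by omega)
    push_cast at h3
    linarith [le_three_mul_slack_four_four]
  · simpa [mul_comm] using hm' 2 (by omega)
  · simpa using hm' 1 (by omega)

/-- Maximum of `SO₆` over molecular trees of order `n ≥ 5`, according to the residue of
`n` modulo `4`. -/
theorem SO6_molecular_tree_upper_bound {V : Type*} [Fintype V] [DecidableEq V]
    (G : SimpleGraph V) [DecidableRel G.Adj] (hT : G.IsTree) (hdeg : ∀ v : V, G.degree v ≤ 4)
    (n : ℕ) (hn : Fintype.card V = n) (hn5 : 5 ≤ n) :
    (n % 4 = 1 → SO6 G ≤ Real.pi *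
      ((g 1 4 + g 2 4) / 2 * n + (3 * g 1 4 - 5 * g 2 4) / 2)) ∧
    (n % 4 = 2 → SO6 G ≤ Real.pi *
      ((g 1 4 + g 2 4) / 2 * n + 2 * g 1 4 - 5 * g 2 4 + g 3 4)) ∧
    (n % 4 = 3 → SO6 G ≤ Real.pi *
      ((g 1 4 + g 2 4) / 2 * n + (5 * g 1 4 - 11 * g 2 4) / 2)) ∧
    (n % 4 = 0 → SO6 G ≤ Real.pi *
      ((g 1 4 + g 2 4) / 2 * n + 2 * g 1 4 - 4 * g 2 4)) := by
  have hpos : ∀ v, 0 < G.degree v := by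
    have : Nontrivial V := Fintype.one_lt_card_iff_nontrivial.1 (by omega)
    exact fun v => hT.connected.preconnected.degree_pos_of_nontrivial v
  have hdeg14 : ∀ v, G.degree v ∈ Icc 1 4 := fun v => mem_Icc.2 ⟨hpos v, hdeg v⟩
  have hE : #G.edgeFinset + 1 = n := hn ▸ hT.card_edgeFinset
  have hS := sum_nonneg fun e (_ : e ∈ G.edgeFinset) => G.edgeSlack_nonneg hdeg14 e
  obtain ⟨h2, h3, h0⟩ := lower_bounds_of_mod_four (n := n)
    ((G.le_sum_edgeSlack_or_exists_eq_mul hdeg14).imp_right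
      fun ⟨m, hm, hmod⟩ => ⟨m, hm, by omega⟩)
  rw [slack_four_four] at h3 h0
  have hEr : (#G.edgeFinset : ℝ) = n - 1 := by rw [← hE]; push_cast; ring
  rw [G.SO6_eq_sub_sum_edgeSlack hpos, hn, hEr]
  refine ⟨fun _ => ?_, fun hr => ?_, fun hr => ?_, fun hr => ?_⟩ <;>
    refine mul_le_mul_of_nonneg_left ?_ Real.pi_pos.le
  · linarith
  · linarith [h2 hr]
  · linarith [h3 hr]
  · linarith [h0 hr]
end

section
/- Let n and k be integers with 1 ≤ k ≤ n and let M_{n,k} be the join of the empty graph on n−k vertices with the complete graph K_k. Then SO₅(M_{n,k}) = 2π · k(n−k) · ((n−1)² − k²) / (√2 + 2√((n−1)² + k²)). -/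
theorem f_symm (a b : ℝ) : f a b = f b a := by
  unfold f; rw [abs_sub_comm, add_comm (a ^ 2)]

/-- The Sombor-index-like invariant `SO₅(G) = 2π · Σ_{uv ∈ E(G)} f(d(u), d(v))`. -/
noncomputable def SO5 {V : Type*} [Fintype V] [DecidableEq V] (G : SimpleGraph V)
    [DecidableRel G.Adj] : ℝ :=
  2 * Real.pi * ∑ e ∈ G.edgeFinset,
    Sym2.lift ⟨fun u v => f (G.degree u) (G.degree v),
      fun u v => f_symm (G.degree u) (G.degree v)⟩ e

/-- `M n k` : the join of the empty graph on `n − k` vertices with the complete graph `K_k`,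
realized on `Fin n` with the first `k` vertices forming the clique. -/
def Mgraph (n k : ℕ) : SimpleGraph (Fin n) where
  Adj u v := u ≠ v ∧ ((u : ℕ) < k ∨ (v : ℕ) < k)
  symm := ⟨fun u v ⟨h1, h2⟩ => ⟨h1.symm, h2.symm⟩⟩
  loopless := ⟨fun v h => h.1 rfl⟩

instance (n k : ℕ) : DecidableRel (Mgraph n k).Adj := fun u v =>
  inferInstanceAs (Decidable (u ≠ v ∧ ((u : ℕ) < k ∨ (v : ℕ) < k)))


/-! Counting every edge from both of its endpoints turns the edge sum into a sum over vertices of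
their neighbourhood sums. An edge inside the clique `K_k` joins two vertices of degree `n − 1` and
contributes `f(n − 1, n − 1) = 0`, so only the `k(n − k)` edges between the clique and the
independent set count, each with `f(n − 1, k)`; when `k < n` we have `k ≤ n − 1`, which removes the
absolute value in `f`. -/

open Finset

theorem SimpleGraph.sum_neighborFinset_eq_two_nsmul_sum_edgeFinset {V M : Type*} [Fintype V]
    [AddCommMonoid M] (G : SimpleGraph V) [DecidableRel G.Adj] (p : Sym2 V → M) :
    ∑ u, ∑ v ∈ G.neighborFinset u, p s(u, v) = 2 • ∑ e ∈ G.edgeFinset, p e := by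
  classical
  have hfst : ∑ d : G.Dart, p d.edge = ∑ u, ∑ v ∈ G.neighborFinset u, p s(u, v) := by
    rw [← sum_fiberwise_of_maps_to (g := fun d : G.Dart => d.fst) (t := univ)
      (fun _ _ => mem_univ _)]
    refine sum_congr rfl fun u _ => ?_
    rw [G.dart_fst_fiber u, sum_image fun _ _ _ _ h => G.dartOfNeighborSet_injective u h,
      sum_subtype (G.neighborFinset u) (fun v => G.mem_neighborFinset u v)]
    rfl
  have hedge : ∑ d : G.Dart, p d.edge = ∑ e ∈ G.edgeFinset, 2 • p e := by
    rw [← sum_fiberwise_of_maps_to (g := SimpleGraph.Dart.edge) (t := G.edgeFinset)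
      (fun d _ => G.mem_edgeFinset.2 d.edge_mem)]
    refine sum_congr rfl fun e he => ?_
    rw [sum_congr rfl fun d hd => congrArg p (mem_filter.1 hd).2, sum_const,
      G.dart_edge_fiber_card e (G.mem_edgeFinset.1 he)]
  rw [← hfst, hedge, smul_sum]

lemma f_self (a : ℝ) : f a a = 0 := by
  simp [f]

lemma f_of_le {a b : ℝ} (hb : 0 ≤ b) (hba : b ≤ a) :
    f a b = (a ^ 2 - b ^ 2) / (Real.sqrt 2 + 2 * Real.sqrt (a ^ 2 + b ^ 2)) := by
  rw [f, abs_of_nonneg (sub_nonneg.2 (pow_le_pow_left₀ hb hba 2))]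

lemma Fin.card_filter_not_val_lt {n k : ℕ} (hkn : k ≤ n) :
    #({v | ¬ (v : ℕ) < k} : Finset (Fin n)) = n - k := by
  rw [filter_not, card_sdiff_of_subset (filter_subset _ _), Fin.card_filter_val_lt, card_univ,
    Fintype.card_fin, min_eq_right hkn]

namespace Mgraph

variable {n k : ℕ}

lemma adj_iff {u v : Fin n} : (Mgraph n k).Adj u v ↔ u ≠ v ∧ ((u : ℕ) < k ∨ (v : ℕ) < k) :=
  Iff.rfl

lemma neighborFinset_of_lt {u : Fin n} (hu : (u : ℕ) < k) :
    (Mgraph n k).neighborFinset u = univ.erase u := by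
  ext v
  simp only [SimpleGraph.mem_neighborFinset, adj_iff, mem_erase, mem_univ, and_true]
  exact ⟨fun h => Ne.symm h.1, fun h => ⟨h.symm, Or.inl hu⟩⟩

lemma neighborFinset_of_not_lt {u : Fin n} (hu : ¬ (u : ℕ) < k) :
    (Mgraph n k).neighborFinset u = ({v | (v : ℕ) < k} : Finset (Fin n)) := by
  ext v
  simp only [SimpleGraph.mem_neighborFinset, adj_iff, mem_filter, mem_univ, true_and]
  exact ⟨fun h => h.2.resolve_left hu, fun hv => ⟨fun h => hu (h ▸ hv), Or.inr hv⟩⟩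

lemma degree_of_lt {u : Fin n} (hu : (u : ℕ) < k) : (Mgraph n k).degree u = n - 1 := by
  rw [← SimpleGraph.card_neighborFinset_eq_degree, neighborFinset_of_lt hu,
    card_erase_of_mem (mem_univ u), card_univ, Fintype.card_fin]

lemma degree_of_not_lt (hkn : k ≤ n) {u : Fin n} (hu : ¬ (u : ℕ) < k) :
    (Mgraph n k).degree u = k := by
  rw [← SimpleGraph.card_neighborFinset_eq_degree, neighborFinset_of_not_lt hu,
    Fin.card_filter_val_lt, min_eq_right hkn]

lemma sum_neighborFinset_f_degree (hkn : k ≤ n) (u : Fin n) :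
    ∑ v ∈ (Mgraph n k).neighborFinset u, f ((Mgraph n k).degree u) ((Mgraph n k).degree v) =
      (if (u : ℕ) < k then n - k else k : ℕ) * f ((n - 1 : ℕ) : ℝ) k := by
  by_cases hu : (u : ℕ) < k
  · have hf : ∀ v : Fin n, f ((n - 1 : ℕ) : ℝ) ((Mgraph n k).degree v) =
        if (v : ℕ) < k then 0 else f ((n - 1 : ℕ) : ℝ) k := by
      intro v
      split_ifs with hv
      · rw [degree_of_lt hv, f_self]
      · rw [degree_of_not_lt hkn hv]
    rw [if_pos hu, neighborFinset_of_lt hu, degree_of_lt hu, sum_congr rfl fun v _ => hf v,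
      sum_erase (f := fun v : Fin n => if (v : ℕ) < k then (0 : ℝ) else f ((n - 1 : ℕ) : ℝ) k)
        univ (if_pos hu), sum_ite, sum_const_zero, zero_add, sum_const, nsmul_eq_mul,
      Fin.card_filter_not_val_lt hkn]
  · rw [if_neg hu, neighborFinset_of_not_lt hu, degree_of_not_lt hkn hu,
      sum_congr rfl fun v hv => by rw [degree_of_lt (mem_filter.1 hv).2, f_symm], sum_const,
      nsmul_eq_mul, Fin.card_filter_val_lt, min_eq_right hkn]

lemma sum_edgeFinset_f_degree (hkn : k ≤ n) :
    ∑ e ∈ (Mgraph n k).edgeFinset, Sym2.lift ⟨fun u v => f ((Mgraph n k).degree u)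
      ((Mgraph n k).degree v), fun _ _ => f_symm _ _⟩ e =
      (k * (n - k) : ℕ) * f ((n - 1 : ℕ) : ℝ) k := by
  have hcount : ∑ u : Fin n, (if (u : ℕ) < k then n - k else k) = 2 * (k * (n - k)) := by
    rw [sum_ite, sum_const, sum_const, Fin.card_filter_val_lt, min_eq_right hkn,
      Fin.card_filter_not_val_lt hkn, smul_eq_mul, smul_eq_mul]
    ring
  have htwice := (Mgraph n k).sum_neighborFinset_eq_two_nsmul_sum_edgeFinset
    (Sym2.lift ⟨fun u v => f ((Mgraph n k).degree u) ((Mgraph n k).degree v),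
      fun _ _ => f_symm _ _⟩)
  simp only [Sym2.lift_mk, sum_neighborFinset_f_degree hkn, ← sum_mul, ← Nat.cast_sum, hcount,
    nsmul_eq_mul] at htwice
  push_cast at htwice ⊢
  linarith

end Mgraph

theorem SO5_Mgraph_general (n k : ℕ) (hkn : k ≤ n) :
    SO5 (Mgraph n k) = 2 * Real.pi * (k * (n - k)) *
      (((n : ℝ) - 1) ^ 2 - (k : ℝ) ^ 2) /
      (Real.sqrt 2 + 2 * Real.sqrt (((n : ℝ) - 1) ^ 2 + (k : ℝ) ^ 2)) := by
  rw [SO5, Mgraph.sum_edgeFinset_f_degree hkn]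
  rcases hkn.lt_or_eq with hlt | rfl
  · have hk : (k : ℝ) ≤ ((n - 1 : ℕ) : ℝ) := by exact_mod_cast Nat.le_sub_one_of_lt hlt
    rw [f_of_le k.cast_nonneg hk]
    push_cast [Nat.cast_sub hlt.le, Nat.cast_sub (by omega : 1 ≤ n)]
    ring
  · simp

/-- `SO₅(M_{n,k}) = 2π · k(n−k) · ((n−1)² − k²)/(√2 + 2√((n−1)² + k²))` for `1 ≤ k ≤ n`. -/
theorem SO5_Mgraph (n k : ℕ) (hk1 : 1 ≤ k) (hkn : k ≤ n) :
    SO5 (Mgraph n k) = 2 * Real.pi * (k * (n - k)) *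
      (((n : ℝ) - 1) ^ 2 - (k : ℝ) ^ 2) /
      (Real.sqrt 2 + 2 * Real.sqrt (((n : ℝ) - 1) ^ 2 + (k : ℝ) ^ 2)) :=
  SO5_Mgraph_general n k hkn
end

section
/- Let a₁, a₂, b be real numbers with 0 ≤ b ≤ a₁ < a₂. Then f(a₁, b) < f(a₂, b), where f(a,b) = |a² − b²| / (√2 + 2√(a² + b²)). In other words, for a fixed second argument b ≥ 0, the function a ↦ f(a,b) is strictly increasing on [b, ∞). -/
/-- For fixed second argument `b ≥ 0`, the function `a ↦ f(a,b)` is strictly increasing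
on `[b, ∞)`. -/
theorem f_strictMono_left (a₁ a₂ b : ℝ) (hb : 0 ≤ b) (hba : b ≤ a₁) (ha : a₁ < a₂) :
    f a₁ b < f a₂ b := by
  have ha1 : 0 ≤ a₁ := le_trans hb hba
  have ha2 : 0 ≤ a₂ := le_of_lt (lt_of_le_of_lt ha1 ha)
  set s₁ := Real.sqrt (a₁ ^ 2 + b ^ 2) with hs1
  set s₂ := Real.sqrt (a₂ ^ 2 + b ^ 2) with hs2
  set r := Real.sqrt 2 with hr
  have hr0 : 0 < r := Real.sqrt_pos.mpr (by norm_num)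
  have hrsq : r ^ 2 = 2 := Real.sq_sqrt (by norm_num)
  have hs1sq : s₁ ^ 2 = a₁ ^ 2 + b ^ 2 := Real.sq_sqrt (by positivity)
  have hs2sq : s₂ ^ 2 = a₂ ^ 2 + b ^ 2 := Real.sq_sqrt (by positivity)
  have hs1nn : 0 ≤ s₁ := Real.sqrt_nonneg _
  have hs2nn : 0 ≤ s₂ := Real.sqrt_nonneg _
  have hslt : s₁ < s₂ := by
    apply Real.sqrt_lt_sqrt (by positivity)
    nlinarith
  have habs1 : |a₁ ^ 2 - b ^ 2| = a₁ ^ 2 - b ^ 2 := abs_of_nonneg (by nlinarith)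
  have habs2 : |a₂ ^ 2 - b ^ 2| = a₂ ^ 2 - b ^ 2 := abs_of_nonneg (by nlinarith)
  unfold f
  rw [← hs1, ← hs2, ← hr, habs1, habs2, div_lt_div_iff₀ (by positivity) (by positivity)]
  nlinarith [mul_pos hr0 (sub_pos.mpr hslt), mul_nonneg (mul_nonneg hs1nn hs2nn) (sub_pos.mpr hslt).le, mul_nonneg (sq_nonneg b) (sub_pos.mpr hslt).le, sq_nonneg (s₂ - s₁)]
end

section
/- The polynomial 6c⁵ − 4c⁴ + 6c³ − 6c² − 4c + 2 has exactly one root in the open interval (0,1), and this root lies in the interval (0.365, 0.3651). Moreover, c = 1 is also a root of this polynomial. -/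
/-- The quintic `6c⁵ − 4c⁴ + 6c³ − 6c² − 4c + 2` has exactly one root in `(0,1)`; this root
lies in `(0.365, 0.3651)`; and `c = 1` is also a root. -/
theorem quintic_root_in_interval :
    (∃! c : ℝ, c ∈ Set.Ioo (0 : ℝ) 1 ∧
      6 * c ^ 5 - 4 * c ^ 4 + 6 * c ^ 3 - 6 * c ^ 2 - 4 * c + 2 = 0) ∧
    (∀ c : ℝ, c ∈ Set.Ioo (0 : ℝ) 1 →
      6 * c ^ 5 - 4 * c ^ 4 + 6 * c ^ 3 - 6 * c ^ 2 - 4 * c + 2 = 0 →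
      c ∈ Set.Ioo (0.365 : ℝ) 0.3651) ∧
    6 * (1 : ℝ) ^ 5 - 4 * (1 : ℝ) ^ 4 + 6 * (1 : ℝ) ^ 3 - 6 * (1 : ℝ) ^ 2 - 4 * 1 + 2 = 0 := by
  -- the auxiliary quartic
  set f : ℝ → ℝ := fun c => 6 * c ^ 5 - 4 * c ^ 4 + 6 * c ^ 3 - 6 * c ^ 2 - 4 * c + 2 with hf
  -- roots of f in (0,1) are roots of the quartic q
  have hfq : ∀ c : ℝ, c < 1 → f c = 0 → 3 * c ^ 4 + c ^ 3 + 4 * c ^ 2 + c - 1 = 0 := by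
    intro c hc h0
    have hfac : f c = 2 * (c - 1) * (3 * c ^ 4 + c ^ 3 + 4 * c ^ 2 + c - 1) := by
      simp only [hf]; ring
    have hne : (2 : ℝ) * (c - 1) ≠ 0 := by
      intro h; nlinarith
    have := h0
    rw [hfac, mul_eq_zero] at this
    rcases this with h | h
    · exact absurd h hne
    · exact h
  -- q is strictly increasing on positives, hence at most one root
  have huniq : ∀ a b : ℝ, 0 < a → 0 < b →
      3 * a ^ 4 + a ^ 3 + 4 * a ^ 2 + a - 1 = 0 →
      3 * b ^ 4 + b ^ 3 + 4 * b ^ 2 + b - 1 = 0 → a = b := by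
    intro a b ha hb hqa hqb
    rcases lt_trichotomy a b with h | h | h
    · exfalso
      have hp : 0 < 3 * (b ^ 3 + a * b ^ 2 + a ^ 2 * b + a ^ 3) +
          (b ^ 2 + a * b + a ^ 2) + 4 * (a + b) + 1 := by positivity
      nlinarith [mul_pos (sub_pos.2 h) hp]
    · exact h
    · exfalso
      have hp : 0 < 3 * (a ^ 3 + b * a ^ 2 + b ^ 2 * a + b ^ 3) +
          (a ^ 2 + b * a + b ^ 2) + 4 * (b + a) + 1 := by positivity
      nlinarith [mul_pos (sub_pos.2 h) hp]
  -- existence of a root via IVT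
  have hcont : ContinuousOn f (Set.Icc (0.365 : ℝ) 0.3651) := by
    apply Continuous.continuousOn; simp only [hf]; fun_prop
  have hivt : Set.Ioo (f 0.3651) (f 0.365) ⊆ f '' Set.Ioo (0.365 : ℝ) 0.3651 :=
    intermediate_value_Ioo' (by norm_num) hcont
  have h0mem : (0 : ℝ) ∈ Set.Ioo (f 0.3651) (f 0.365) := by
    simp only [hf]; constructor <;> norm_num
  obtain ⟨c₀, hc₀mem, hc₀⟩ := hivt h0mem
  have hc₀01 : c₀ ∈ Set.Ioo (0 : ℝ) 1 := by
    constructor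
    · linarith [hc₀mem.1]
    · linarith [hc₀mem.2]
  refine ⟨⟨c₀, ⟨hc₀01, hc₀⟩, ?_⟩, ?_, by norm_num⟩
  · rintro y ⟨hy01, hy0⟩
    exact huniq y c₀ hy01.1 hc₀01.1 (hfq y hy01.2 hy0) (hfq c₀ hc₀01.2 hc₀)
  · intro c hc01 hc0
    have := huniq c c₀ hc01.1 hc₀01.1 (hfq c hc01.2 hc0) (hfq c₀ hc₀01.2 hc₀)
    rw [this]; exact hc₀mem
end

section
/- Let n ≥ 3 be an integer and define T : ℝ → ℝ by T(δ) = 6δ⁵ − 4nδ⁴ + 6(n−1)²δ³ − 6n(n−1)²δ² − 4(n−1)⁴δ + 2n(n−1)⁴ + √(2δ² + 2(n−1)²) · (4δ³ − 3nδ² − 2(n−1)²δ + n(n−1)²). Then T has at least one zero in the open interval (c₀n − 1/2, c₀n), and every zero of T in the interval [1, n−1] lies in (c₀n − 1/2, c₀n). -/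
set_option maxHeartbeats 2000000


private lemma cb (c : ℝ) (h0 : 0 < c) (h1 : c < 1)
    (hq : 3*c^4 + c^3 + 4*c^2 + c - 1 = 0) :
    36504/100000 < c ∧ c < 36505/100000 := by
  constructor
  · nlinarith [hq, mul_pos h0 h0, mul_pos (mul_pos h0 h0) h0, sq_nonneg (c - 36504/100000), sq_nonneg (c + 1)]
  · nlinarith [hq, mul_pos h0 h0, mul_pos (mul_pos h0 h0) h0, sq_nonneg (c - 36505/100000), sq_nonneg (c + 1)]

private lemma Qneg (N x : ℝ) (hN : 3 ≤ N) (hx : 45/100*N ≤ x) (hx2 : x ≤ N - 1) :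
    4*x^3 - 3*N*x^2 - 2*(N-1)^2*x + N*(N-1)^2 < 0 := by
  nlinarith [mul_nonneg (sub_nonneg.2 hx) (sub_nonneg.2 hx2), sq_nonneg (x - 45/100*N), sq_nonneg (N - 1 - x), mul_pos (by linarith : (0:ℝ) < N) (by linarith : (0:ℝ) < x)]

private lemma Qpos (N x : ℝ) (hN : 3 ≤ N) (hx : 59/100 ≤ x) (hx2 : x ≤ 30/100*N) :
    0 < 4*x^3 - 3*N*x^2 - 2*(N-1)^2*x + N*(N-1)^2 := by
  nlinarith [mul_nonneg (sub_nonneg.2 hx) (sub_nonneg.2 hx2), sq_nonneg (x - 59/100), sq_nonneg (30/100*N - x), mul_pos (by linarith : (0:ℝ) < N) (by linarith : (0:ℝ) < x), mul_nonneg (mul_nonneg (sub_nonneg.2 hx) (sub_nonneg.2 hx2)) (by linarith : (0:ℝ) ≤ N)]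

private lemma EWpos (N z x : ℝ) (hN : 3 ≤ N) (hz : 59/100 ≤ z) (hzx : z ≤ x) (hx : x ≤ 45/100*N) :
    0 ≤ 2*N^4 + 3*N^3*x + 3*N^3*z + (-8)*N^3 + (-3)*N^2*x^2 + (-3)*N^2*x*z + (-6)*N^2*x + (-3)*N^2*z^2 + (-6)*N^2*z + 12*N^2 + 2*N*x^3 + 2*N*x^2*z + 6*N*x^2 + 2*N*x*z^2 + 6*N*x*z + 3*N*x + 2*N*z^3 + 6*N*z^2 + 3*N*z + (-8)*N + (-3)*x^4 + (-3)*x^3*z + (-3)*x^2*z^2 + (-3)*x^2 + (-3)*x*z^3 + (-3)*x*z + (-3)*z^4 + (-3)*z^2 + 2 := by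
  have hx0 : (0:ℝ) < x := by linarith
  have hz0 : (0:ℝ) < z := by linarith
  have h2 : (0:ℝ) ≤ 45/100*N - x := by linarith
  have key : 2*N^4 + 3*N^3*x + 3*N^3*z + (-8)*N^3 + (-3)*N^2*x^2 + (-3)*N^2*x*z + (-6)*N^2*x + (-3)*N^2*z^2 + (-6)*N^2*z + 12*N^2 + 2*N*x^3 + 2*N*x^2*z + 6*N*x^2 + 2*N*x*z^2 + 6*N*x*z + 3*N*x + 2*N*z^3 + 6*N*z^2 + 3*N*z + (-8)*N + (-3)*x^4 + (-3)*x^3*z + (-3)*x^2*z^2 + (-3)*x^2 + (-3)*x*z^3 + (-3)*x*z + (-3)*z^4 + (-3)*z^2 + 2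
      = 2*(N-1)^4 + 3*(N-1)^2*(N*(x+z) - (x^2+x*z+z^2)) + (2*N*(x^3+x^2*z+x*z^2+z^3) - 3*(x^4+x^3*z+x^2*z^2+x*z^3+z^4)) := by ring
  rw [key]
  have hA : 0 ≤ N*(x+z) - (x^2+x*z+z^2) := by
    nlinarith [mul_nonneg (sub_nonneg.2 hzx) (by linarith : (0:ℝ) ≤ x + 2*z),
               mul_nonneg h2 (by linarith : (0:ℝ) ≤ x + z)]
  have hS3 : (0:ℝ) ≤ x^3+x^2*z+x*z^2+z^3 := by positivity
  have hB : 0 ≤ 2*N*(x^3+x^2*z+x*z^2+z^3) - 3*(x^4+x^3*z+x^2*z^2+x*z^3+z^4) := by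
    nlinarith [mul_nonneg h2 hS3,
               mul_nonneg h2 (by positivity : (0:ℝ) ≤ z^3),
               mul_nonneg (sub_nonneg.2 hzx) (by positivity : (0:ℝ) ≤ z^3),
               mul_nonneg (mul_nonneg (sub_nonneg.2 hzx) hz0.le) (by positivity : (0:ℝ) ≤ z^2),
               mul_nonneg (mul_nonneg (sub_nonneg.2 hzx) hx0.le) (by positivity : (0:ℝ) ≤ z^2),
               mul_nonneg (mul_nonneg (sub_nonneg.2 hzx) hx0.le) (mul_nonneg hx0.le hz0.le)]
  nlinarith [mul_nonneg (sq_nonneg (N-1)) hA, sq_nonneg ((N-1)^2)]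

private lemma ESpos (N z x : ℝ) (hN : 3 ≤ N) (hz : 30/100*N ≤ z) (hzx : z ≤ x) (hx : x ≤ 45/100*N) :
    0 ≤ 4*N^5 + 20*N^4*x + 20*N^4*z + (-20)*N^4 + (-58)*N^3*x + (-58)*N^3*z + 38*N^3 + (-4)*N^2*x^3 + (-4)*N^2*x^2*z + 12*N^2*x^2 + (-4)*N^2*x*z^2 + 12*N^2*x*z + 60*N^2*x + (-4)*N^2*z^3 + 12*N^2*z^2 + 60*N^2*z + (-34)*N^2 + (-4)*N*x^4 + (-4)*N*x^3*z + 17*N*x^3 + (-4)*N*x^2*z^2 + 17*N*x^2*z + (-18)*N*x^2 + (-4)*N*x*z^3 + 17*N*x*z^2 + (-18)*N*x*z + (-26)*N*x + (-4)*N*z^4 + 17*N*z^3 + (-18)*N*z^2 + (-26)*N*z + 14*N + (-12)*x^5 + (-12)*x^4*z + (-12)*x^3*z^2 + (-4)*x^3 + (-12)*x^2*z^3 + (-4)*x^2*z + 6*x^2 + (-12)*x*z^4 + (-4)*x*z^2 + 6*x*z + 4*x + (-12)*z^5 + (-4)*z^3 + 6*z^2 + 4*z + (-2) := by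
  have hx0 : (0:ℝ) < x := by linarith
  have hz0 : (0:ℝ) < z := by linarith
  have hM : (2:ℝ) ≤ N - 1 := by linarith
  have hA : 0 ≤ (27/40)*N*(x+z) - (x^2+x*z+z^2) := by
    nlinarith [mul_nonneg (sub_nonneg.2 hzx) (by linarith : (0:ℝ) ≤ x + 2*z),
               mul_nonneg (by linarith : (0:ℝ) ≤ 45/100*N - x) (by linarith : (0:ℝ) ≤ x + z)]
  have hB : 0 ≤ 2*N*(x^3+x^2*z+x*z^2+z^3) - 3*(x^4+x^3*z+x^2*z^2+x*z^3+z^4) := by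
    nlinarith [mul_nonneg (by linarith : (0:ℝ) ≤ 45/100*N - x) (by positivity : (0:ℝ) ≤ x^3+x^2*z+x*z^2+z^3),
               mul_nonneg (by linarith : (0:ℝ) ≤ 45/100*N - x) (by positivity : (0:ℝ) ≤ z^3),
               mul_nonneg (sub_nonneg.2 hzx) (by positivity : (0:ℝ) ≤ z^3),
               mul_nonneg (mul_nonneg (sub_nonneg.2 hzx) hz0.le) (by positivity : (0:ℝ) ≤ z^2),
               mul_nonneg (mul_nonneg (sub_nonneg.2 hzx) hx0.le) (by positivity : (0:ℝ) ≤ z^2),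
               mul_nonneg (mul_nonneg (sub_nonneg.2 hzx) hx0.le) (mul_nonneg hx0.le hz0.le)]
  -- p1 : 4(z+m)·(EW - (2m⁴+(39/40)Nm²σ)) ≥ 0, with EW - (...) = 3m²·hA + hB
  have p1 : 0 ≤ 4*(z+(N-1)) * (3*(N-1)^2*((27/40)*N*(x+z) - (x^2+x*z+z^2)) + (2*N*(x^3+x^2*z+x*z^2+z^3) - 3*(x^4+x^3*z+x^2*z^2+x*z^3+z^4))) := by
    apply mul_nonneg (by linarith)
    have := mul_nonneg (sq_nonneg (N-1)) hA
    linarith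
  have f3 : 3*x^5 - 2*N*x^4 + 3*(N-1)^2*x^3 - 3*N*(N-1)^2*x^2 - 2*(N-1)^4*x + N*(N-1)^4 ≤ (2/5)*N*(N-1)^4 := by
    nlinarith [mul_nonneg (mul_nonneg (mul_nonneg hx0.le hx0.le) (mul_nonneg hx0.le hx0.le)) (by linarith : (0:ℝ) ≤ 2*N - 3*x),
               mul_nonneg (mul_nonneg (sq_nonneg (N-1)) (mul_nonneg hx0.le hx0.le)) (by linarith : (0:ℝ) ≤ N - x),
               mul_nonneg (sq_nonneg ((N-1)^2)) (by linarith : (0:ℝ) ≤ 2*x - (3/5)*N)]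
  have f4 : 4*x^3 - 3*N*x^2 - 2*(N-1)^2*x + N*(N-1)^2 ≤ (2/5)*N*(N-1)^2 := by
    nlinarith [mul_nonneg (mul_nonneg hx0.le hx0.le) (by linarith : (0:ℝ) ≤ 3*N - 4*x),
               mul_nonneg (sq_nonneg (N-1)) (by linarith : (0:ℝ) ≤ 2*x - (3/5)*N)]
  have p2 : 0 ≤ (3*(x+z)+2*(N-1)) * ((2/5)*N*(N-1)^2 - (4*x^3 - 3*N*x^2 - 2*(N-1)^2*x + N*(N-1)^2)) :=
    mul_nonneg (by linarith) (by linarith)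
  have p3 : 0 ≤ (3*z^2+2*z*(N-1)+3*(N-1)^2) * (3*N*(x+z) + 2*(N-1)^2 - 4*(x^2+x*z+z^2)) := by
    apply mul_nonneg (by positivity)
    nlinarith [mul_nonneg (sub_nonneg.2 hzx) (by linarith : (0:ℝ) ≤ x + 2*z),
               mul_nonneg (by linarith : (0:ℝ) ≤ 45/100*N - x) (by linarith : (0:ℝ) ≤ x + z),
               sq_nonneg (N-1)]
  have final : 0 ≤ 4*(z+(N-1))*(2*(N-1)^4 + (39/40)*N*(N-1)^2*(x+z)) - 4*((2/5)*N*(N-1)^4) - (3*(x+z)+2*(N-1))*((2/5)*N*(N-1)^2) := by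
    nlinarith [mul_nonneg (sq_nonneg ((N-1)^2)) (by linarith : (0:ℝ) ≤ 4*N - 5),
               mul_nonneg hz0.le (mul_nonneg (sq_nonneg (N-1)) (sq_nonneg (N-1))),
               mul_nonneg (mul_nonneg (mul_nonneg (by linarith : (0:ℝ) ≤ N) (sq_nonneg (N-1))) (by linarith : (0:ℝ) ≤ x + z)) (by linarith : (0:ℝ) ≤ (N-1) - 2),
               mul_nonneg (mul_nonneg (by linarith : (0:ℝ) ≤ N) (mul_nonneg (sq_nonneg (N-1)) (by linarith : (0:ℝ) ≤ N-1))) (by linarith : (0:ℝ) ≤ (x+z) - 1),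
               mul_nonneg (mul_nonneg (by linarith : (0:ℝ) ≤ N) (sq_nonneg (N-1))) (by linarith : (0:ℝ) ≤ x + z)]
  linarith [p1, p2, p3, final, f3]

private lemma pt_WcN (c N : ℝ) (hN : 3 ≤ N) (hlo : 36504/100000 ≤ c) (hhi : c ≤ 36505/100000)
    (hq : 3*c^4 + c^3 + 4*c^2 + c - 1 = 0) :
    3*(c*N)^5 - 2*N*(c*N)^4 + 3*(N-1)^2*(c*N)^3 - 3*N*(N-1)^2*(c*N)^2 - 2*(N-1)^4*(c*N) + N*(N-1)^4 < 0 := by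
  have hA : 3*(c*N)^5 - 2*N*(c*N)^4 + 3*(N-1)^2*(c*N)^3 - 3*N*(N-1)^2*(c*N)^2 - 2*(N-1)^4*(c*N) + N*(N-1)^4 = (-6)*c^3*N^4 + 3*c^3*N^3 + 6*c^2*N^4 + (-3)*c^2*N^3 + 8*c*N^4 + (-12)*c*N^3 + 8*c*N^2 + (-2)*c*N + (-4)*N^4 + 6*N^3 + (-4)*N^2 + N := by linear_combination (c*N^5 - N^5) * hq
  rw [hA]
  have h0c : (0:ℝ) ≤ c := by linarith
  have hN3 : (0:ℝ) ≤ N - 3 := by linarith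
  have b4 : (-6)*c^3 + (6)*c^2 + (8)*c + (-4) ≤ (-71489/125000) := by nlinarith [mul_nonneg (sub_nonneg.2 hlo) (sub_nonneg.2 hhi), mul_nonneg (mul_nonneg (sub_nonneg.2 hlo) (sub_nonneg.2 hhi)) h0c, sq_nonneg c]
  have b3 : (3)*c^3 + (-3)*c^2 + (-12)*c + (6) ≤ (170711/125000) := by nlinarith [mul_nonneg (sub_nonneg.2 hlo) (sub_nonneg.2 hhi), mul_nonneg (mul_nonneg (sub_nonneg.2 hlo) (sub_nonneg.2 hhi)) h0c, sq_nonneg c]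
  have b2 : (8)*c + (-4) ≤ (-1079599/1000000) := by nlinarith [mul_nonneg (sub_nonneg.2 hlo) (sub_nonneg.2 hhi), mul_nonneg (mul_nonneg (sub_nonneg.2 hlo) (sub_nonneg.2 hhi)) h0c, sq_nonneg c]
  have b1 : (-2)*c + (1) ≤ (269921/1000000) := by nlinarith [mul_nonneg (sub_nonneg.2 hlo) (sub_nonneg.2 hhi), mul_nonneg (mul_nonneg (sub_nonneg.2 hlo) (sub_nonneg.2 hhi)) h0c, sq_nonneg c]
  have m4 := mul_le_mul_of_nonneg_right b4 (by positivity : (0:ℝ) ≤ N^4)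
  have m3 := mul_le_mul_of_nonneg_right b3 (by positivity : (0:ℝ) ≤ N^3)
  have m2 := mul_le_mul_of_nonneg_right b2 (by positivity : (0:ℝ) ≤ N^2)
  have m1 := mul_le_mul_of_nonneg_right b1 (by positivity : (0:ℝ) ≤ N^1)
  nlinarith [m4, m3, m2, m1, pow_nonneg hN3 2, pow_nonneg hN3 3, pow_nonneg hN3 4, hN3]

private lemma pt_ScN (c N : ℝ) (hN : 3 ≤ N) (hlo : 36504/100000 ≤ c) (hhi : c ≤ 36505/100000)
    (hq : 3*c^4 + c^3 + 4*c^2 + c - 1 = 0) :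
    4*((c*N)+(N-1))*(3*(c*N)^5 - 2*N*(c*N)^4 + 3*(N-1)^2*(c*N)^3 - 3*N*(N-1)^2*(c*N)^2 - 2*(N-1)^4*(c*N) + N*(N-1)^4) + (3*(c*N)^2+2*(c*N)*(N-1)+3*(N-1)^2)*(4*(c*N)^3 - 3*N*(c*N)^2 - 2*(N-1)^2*(c*N) + N*(N-1)^2) < 0 := by
  have hA : 4*((c*N)+(N-1))*(3*(c*N)^5 - 2*N*(c*N)^4 + 3*(N-1)^2*(c*N)^3 - 3*N*(N-1)^2*(c*N)^2 - 2*(N-1)^4*(c*N) + N*(N-1)^4) + (3*(c*N)^2+2*(c*N)*(N-1)+3*(N-1)^2)*(4*(c*N)^3 - 3*N*(c*N)^2 - 2*(N-1)^2*(c*N) + N*(N-1)^2) = (-19/3)*c^3*N^5 + (50/3)*c^3*N^4 + (-6)*c^3*N^3 + (242/3)*c^2*N^5 + (-196/3)*c^2*N^4 + 26*c^2*N^3 + (-4)*c^2*N^2 + (77/3)*c*N^5 + (-118/3)*c*N^4 + 34*c*N^3 + (-14)*c*N^2 + 2*c*N + (-68/3)*N^5 + (88/3)*N^4 + (-22)*N^3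 + 8*N^2 - N := by linear_combination (4*c^2*N^6 + (-4)*N^6 + (-17/3)*N^5 + (4/3)*N^4) * hq
  rw [hA]
  have h0c : (0:ℝ) ≤ c := by linarith
  have hN3 : (0:ℝ) ≤ N - 3 := by linarith
  have b5 : (-19/3)*c^3 + (242/3)*c^2 + (77/3)*c + (-68/3) ≤ (-1427693/500000) := by nlinarith [mul_nonneg (sub_nonneg.2 hlo) (sub_nonneg.2 hhi), mul_nonneg (mul_nonneg (sub_nonneg.2 hlo) (sub_nonneg.2 hhi)) h0c, sq_nonneg c]
  have b4 : (50/3)*c^3 + (-196/3)*c^2 + (-118/3)*c + (88/3) ≤ (110623/15625) := by nlinarith [mul_nonneg (sub_nonneg.2 hlo) (sub_nonneg.2 hhi), mul_nonneg (mul_nonneg (sub_nonneg.2 hlo) (sub_nonneg.2 hhi)) h0c, sq_nonneg c]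
  have b3 : (-6)*c^3 + (26)*c^2 + (34)*c + (-22) ≤ (-3207691/500000) := by nlinarith [mul_nonneg (sub_nonneg.2 hlo) (sub_nonneg.2 hhi), mul_nonneg (mul_nonneg (sub_nonneg.2 hlo) (sub_nonneg.2 hhi)) h0c, sq_nonneg c]
  have b2 : (-4)*c^2 + (-14)*c + (8) ≤ (94257/40000) := by nlinarith [mul_nonneg (sub_nonneg.2 hlo) (sub_nonneg.2 hhi), mul_nonneg (mul_nonneg (sub_nonneg.2 hlo) (sub_nonneg.2 hhi)) h0c, sq_nonneg c]
  have b1 : (2)*c + (-1) ≤ (-269899/1000000) := by nlinarith [mul_nonneg (sub_nonneg.2 hlo) (sub_nonneg.2 hhi), mul_nonneg (mul_nonneg (sub_nonneg.2 hlo) (sub_nonneg.2 hhi)) h0c, sq_nonneg c]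
  have m5 := mul_le_mul_of_nonneg_right b5 (by positivity : (0:ℝ) ≤ N^5)
  have m4 := mul_le_mul_of_nonneg_right b4 (by positivity : (0:ℝ) ≤ N^4)
  have m3 := mul_le_mul_of_nonneg_right b3 (by positivity : (0:ℝ) ≤ N^3)
  have m2 := mul_le_mul_of_nonneg_right b2 (by positivity : (0:ℝ) ≤ N^2)
  have m1 := mul_le_mul_of_nonneg_right b1 (by positivity : (0:ℝ) ≤ N^1)
  nlinarith [m5, m4, m3, m2, m1, pow_nonneg hN3 2, pow_nonneg hN3 3, pow_nonneg hN3 4, pow_nonneg hN3 5, hN3]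

private lemma pt_Wx1 (c N : ℝ) (hN : 3 ≤ N) (hlo : 36504/100000 ≤ c) (hhi : c ≤ 36505/100000)
    (hq : 3*c^4 + c^3 + 4*c^2 + c - 1 = 0) :
    3*(c*N - 1/2)^5 - 2*N*(c*N - 1/2)^4 + 3*(N-1)^2*(c*N - 1/2)^3 - 3*N*(N-1)^2*(c*N - 1/2)^2 - 2*(N-1)^4*(c*N - 1/2) + N*(N-1)^4 > 0 := by
  have hA : 3*(c*N - 1/2)^5 - 2*N*(c*N - 1/2)^4 + 3*(N-1)^2*(c*N - 1/2)^3 - 3*N*(N-1)^2*(c*N - 1/2)^2 - 2*(N-1)^4*(c*N - 1/2) + N*(N-1)^4 = (1/2)*c^3*N^4 + (21/2)*c^3*N^3 + (23/2)*c^2*N^4 + 3*c^2*N^3 + (-33/4)*c^2*N^2 + (27/2)*c*N^4 + (-63/4)*c*N^3 + (15/2)*c*N^2 + (19/16)*c*N + (-11/2)*N^4 + (5/4)*N^3 + (25/8)*N^2 + (-25/8)*N + (17/32) := by linear_combination (c*N^5 - N^5 + (-5/2)*N^4) * hq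
  rw [hA]
  have h0c : (0:ℝ) ≤ c := by linarith
  have hN3 : (0:ℝ) ≤ N - 3 := by linarith
  have b4 : (984783/1000000) ≤ (1/2)*c^3 + (23/2)*c^2 + (27/2)*c + (-11/2) := by nlinarith [mul_nonneg (sub_nonneg.2 hlo) (sub_nonneg.2 hhi), mul_nonneg (mul_nonneg (sub_nonneg.2 hlo) (sub_nonneg.2 hhi)) h0c, sq_nonneg c]
  have b3 : (-22431/6250) ≤ (21/2)*c^3 + (3)*c^2 + (-63/4)*c + (5/4) := by nlinarith [mul_nonneg (sub_nonneg.2 hlo) (sub_nonneg.2 hhi), mul_nonneg (mul_nonneg (sub_nonneg.2 hlo) (sub_nonneg.2 hhi)) h0c, sq_nonneg c]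
  have b2 : (4763451/1000000) ≤ (-33/4)*c^2 + (15/2)*c + (25/8) := by nlinarith [mul_nonneg (sub_nonneg.2 hlo) (sub_nonneg.2 hhi), mul_nonneg (mul_nonneg (sub_nonneg.2 hlo) (sub_nonneg.2 hhi)) h0c, sq_nonneg c]
  have b1 : (-672879/250000) ≤ (19/16)*c + (-25/8) := by nlinarith [mul_nonneg (sub_nonneg.2 hlo) (sub_nonneg.2 hhi), mul_nonneg (mul_nonneg (sub_nonneg.2 hlo) (sub_nonneg.2 hhi)) h0c, sq_nonneg c]
  have b0 : (531249/1000000) ≤ (17/32) := by norm_num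
  have m4 := mul_le_mul_of_nonneg_right b4 (by positivity : (0:ℝ) ≤ N^4)
  have m3 := mul_le_mul_of_nonneg_right b3 (by positivity : (0:ℝ) ≤ N^3)
  have m2 := mul_le_mul_of_nonneg_right b2 (by positivity : (0:ℝ) ≤ N^2)
  have m1 := mul_le_mul_of_nonneg_right b1 (by positivity : (0:ℝ) ≤ N^1)
  nlinarith [m4, m3, m2, m1, b0, pow_nonneg hN3 2, pow_nonneg hN3 3, pow_nonneg hN3 4, hN3]

private lemma pt_Sx1 (c N : ℝ) (hN : 3 ≤ N) (hlo : 36504/100000 ≤ c) (hhi : c ≤ 36505/100000)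
    (hq : 3*c^4 + c^3 + 4*c^2 + c - 1 = 0) :
    4*((c*N - 1/2)+(N-1))*(3*(c*N - 1/2)^5 - 2*N*(c*N - 1/2)^4 + 3*(N-1)^2*(c*N - 1/2)^3 - 3*N*(N-1)^2*(c*N - 1/2)^2 - 2*(N-1)^4*(c*N - 1/2) + N*(N-1)^4) + (3*(c*N - 1/2)^2+2*(c*N - 1/2)*(N-1)+3*(N-1)^2)*(4*(c*N - 1/2)^3 - 3*N*(c*N - 1/2)^2 - 2*(N-1)^2*(c*N - 1/2) + N*(N-1)^2) > 0 := by
  have hA : 4*((c*N - 1/2)+(N-1))*(3*(c*N - 1/2)^5 - 2*N*(c*N - 1/2)^4 + 3*(N-1)^2*(c*N - 1/2)^3 - 3*N*(N-1)^2*(c*N - 1/2)^2 - 2*(N-1)^4*(c*N - 1/2) + N*(N-1)^4) + (3*(c*N - 1/2)^2+2*(c*N - 1/2)*(N-1)+3*(N-1)^2)*(4*(c*N - 1/2)^3 - 3*N*(c*N - 1/2)^2 - 2*(N-1)^2*(c*N - 1/2) + N*(N-1)^2) = 33*c^3*N^5 + (137/3)*c^3*N^4 + (-44)*c^3*N^3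 + 90*c^2*N^5 + (-304/3)*c^2*N^4 + (-63/2)*c^2*N^3 + (89/4)*c^2*N^2 + 33*c*N^5 + (-337/3)*c*N^4 + 83*c*N^3 + (-67/4)*c*N^2 + (-11/4)*c*N + (-20)*N^5 + (88/3)*N^4 + (23/2)*N^3 + (-89/4)*N^2 + (145/16)*N + (-13/16) := by linear_combination (4*c^2*N^6 + (-12)*c*N^5 + (-4)*N^6 + (-5)*N^5 + (49/3)*N^4) * hq
  rw [hA]
  have h0c : (0:ℝ) ≤ c := by linarith
  have hN3 : (0:ℝ) ≤ N - 3 := by linarith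
  have b5 : (5644419/1000000) ≤ (33)*c^3 + (90)*c^2 + (33)*c + (-20) := by nlinarith [mul_nonneg (sub_nonneg.2 hlo) (sub_nonneg.2 hhi), mul_nonneg (mul_nonneg (sub_nonneg.2 hlo) (sub_nonneg.2 hhi)) h0c, sq_nonneg c]
  have b4 : (-2869529/125000) ≤ (137/3)*c^3 + (-304/3)*c^2 + (-337/3)*c + (88/3) := by nlinarith [mul_nonneg (sub_nonneg.2 hlo) (sub_nonneg.2 hhi), mul_nonneg (mul_nonneg (sub_nonneg.2 hlo) (sub_nonneg.2 hhi)) h0c, sq_nonneg c]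
  have b3 : (17730257/500000) ≤ (-44)*c^3 + (-63/2)*c^2 + (83)*c + (23/2) := by nlinarith [mul_nonneg (sub_nonneg.2 hlo) (sub_nonneg.2 hhi), mul_nonneg (mul_nonneg (sub_nonneg.2 hlo) (sub_nonneg.2 hhi)) h0c, sq_nonneg c]
  have b2 : (-25399521/1000000) ≤ (89/4)*c^2 + (-67/4)*c + (-89/4) := by nlinarith [mul_nonneg (sub_nonneg.2 hlo) (sub_nonneg.2 hhi), mul_nonneg (mul_nonneg (sub_nonneg.2 hlo) (sub_nonneg.2 hhi)) h0c, sq_nonneg c]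
  have b1 : (8058611/1000000) ≤ (-11/4)*c + (145/16) := by nlinarith [mul_nonneg (sub_nonneg.2 hlo) (sub_nonneg.2 hhi), mul_nonneg (mul_nonneg (sub_nonneg.2 hlo) (sub_nonneg.2 hhi)) h0c, sq_nonneg c]
  have b0 : (-812501/1000000) ≤ (-13/16) := by norm_num
  have m5 := mul_le_mul_of_nonneg_right b5 (by positivity : (0:ℝ) ≤ N^5)
  have m4 := mul_le_mul_of_nonneg_right b4 (by positivity : (0:ℝ) ≤ N^4)
  have m3 := mul_le_mul_of_nonneg_right b3 (by positivity : (0:ℝ) ≤ N^3)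
  have m2 := mul_le_mul_of_nonneg_right b2 (by positivity : (0:ℝ) ≤ N^2)
  have m1 := mul_le_mul_of_nonneg_right b1 (by positivity : (0:ℝ) ≤ N^1)
  nlinarith [m5, m4, m3, m2, m1, b0, pow_nonneg hN3 2, pow_nonneg hN3 3, pow_nonneg hN3 4, pow_nonneg hN3 5, hN3]


private lemma Wmono (N z x : ℝ) (hN : 3 ≤ N) (hz : 59/100 ≤ z) (hzx : z ≤ x) (hx : x ≤ 45/100*N) :
    3*x^5 - 2*N*x^4 + 3*(N-1)^2*x^3 - 3*N*(N-1)^2*x^2 - 2*(N-1)^4*x + N*(N-1)^4 ≤ 3*z^5 - 2*N*z^4 + 3*(N-1)^2*z^3 - 3*N*(N-1)^2*z^2 - 2*(N-1)^4*z + N*(N-1)^4 := by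
  nlinarith [mul_nonneg (sub_nonneg.2 hzx) (EWpos N z x hN hz hzx hx)]

private lemma Smono (N z x : ℝ) (hN : 3 ≤ N) (hz : 30/100*N ≤ z) (hzx : z ≤ x) (hx : x ≤ 45/100*N) :
    4*(x+(N-1))*(3*x^5 - 2*N*x^4 + 3*(N-1)^2*x^3 - 3*N*(N-1)^2*x^2 - 2*(N-1)^4*x + N*(N-1)^4) + (3*x^2+2*x*(N-1)+3*(N-1)^2)*(4*x^3 - 3*N*x^2 - 2*(N-1)^2*x + N*(N-1)^2) ≤ 4*(z+(N-1))*(3*z^5 - 2*N*z^4 + 3*(N-1)^2*z^3 - 3*N*(N-1)^2*z^2 - 2*(N-1)^4*z + N*(N-1)^4) + (3*z^2+2*z*(N-1)+3*(N-1)^2)*(4*z^3 - 3*N*z^2 - 2*(N-1)^2*z + N*(N-1)^2) := by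
  nlinarith [mul_nonneg (sub_nonneg.2 hzx) (ESpos N z x hN hz hzx hx)]

private lemma bridge_pos (M x u w q : ℝ) (hxM : 0 < x + M) (hu : 0 < u)
    (hu2 : u^2 = 2*x^2 + 2*M^2) (hW : 0 < w)
    (hS : 0 < 4*(x+M)*w + (3*x^2+2*x*M+3*M^2)*q) :
    0 < 2*w + u*q := by
  rcases le_or_gt 0 q with h|h
  · nlinarith [mul_nonneg hu.le h]
  · have h2 : 0 < (x+M) * (2*w + u*q) := by
      nlinarith [mul_nonneg (sq_nonneg (u - (x+M))) (neg_nonneg.2 h.le)]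
    by_contra hcon
    push_neg at hcon
    nlinarith [mul_nonpos_of_nonneg_of_nonpos hxM.le hcon]

private lemma bridge_neg (M x u w q : ℝ) (hxM : 0 < x + M) (hu : 0 < u)
    (hu2 : u^2 = 2*x^2 + 2*M^2) (hW : w < 0)
    (hS : 4*(x+M)*w + (3*x^2+2*x*M+3*M^2)*q < 0) :
    2*w + u*q < 0 := by
  rcases le_or_gt q 0 with h|h
  · nlinarith [mul_nonpos_of_nonneg_of_nonpos hu.le h]
  · have h2 : (x+M) * (2*w + u*q) < 0 := by
      nlinarith [mul_nonneg (sq_nonneg (u - (x+M))) h.le]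
    by_contra hcon
    push_neg at hcon
    nlinarith [mul_nonneg hxM.le hcon]


/-- For `n ≥ 3`, the numerator `T` of the derivative of
`F(δ) = δ(n−δ)((n−1)² − δ²)/(√2 + 2√((n−1)² + δ²))` has at least one zero in the interval
`(c₀n − 1/2, c₀n)`, and every zero of `T` in `[1, n−1]` lies in `(c₀n − 1/2, c₀n)`, where
`c₀` is the unique root in `(0,1)` of `6c⁵ − 4c⁴ + 6c³ − 6c² − 4c + 2 = 0`. -/
theorem T_zeros_localized (n : ℕ) (hn : 3 ≤ n)
    (c₀ : ℝ) (hc₀ : c₀ ∈ Set.Ioo (0 : ℝ) 1)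
    (hroot : 6 * c₀ ^ 5 - 4 * c₀ ^ 4 + 6 * c₀ ^ 3 - 6 * c₀ ^ 2 - 4 * c₀ + 2 = 0)
    (T : ℝ → ℝ)
    (hT : ∀ δ : ℝ, T δ =
      6 * δ ^ 5 - 4 * (n : ℝ) * δ ^ 4 + 6 * ((n : ℝ) - 1) ^ 2 * δ ^ 3
        - 6 * (n : ℝ) * ((n : ℝ) - 1) ^ 2 * δ ^ 2 - 4 * ((n : ℝ) - 1) ^ 4 * δ
        + 2 * (n : ℝ) * ((n : ℝ) - 1) ^ 4
        + Real.sqrt (2 * δ ^ 2 + 2 * ((n : ℝ) - 1) ^ 2) *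
            (4 * δ ^ 3 - 3 * (n : ℝ) * δ ^ 2 - 2 * ((n : ℝ) - 1) ^ 2 * δ
              + (n : ℝ) * ((n : ℝ) - 1) ^ 2)) :
    (∃ x ∈ Set.Ioo (c₀ * n - 1 / 2) (c₀ * n), T x = 0) ∧
    (∀ x ∈ Set.Icc (1 : ℝ) ((n : ℝ) - 1), T x = 0 →
      x ∈ Set.Ioo (c₀ * n - 1 / 2) (c₀ * n)) := by
  obtain ⟨hc0, hc1⟩ := hc₀
  set N : ℝ := (n : ℝ) with hNdef
  have hN : (3:ℝ) ≤ N := by rw [hNdef]; exact_mod_cast hn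
  have hq : 3*c₀^4 + c₀^3 + 4*c₀^2 + c₀ - 1 = 0 := by
    have h2 : (c₀ - 1) * (2*(3*c₀^4 + c₀^3 + 4*c₀^2 + c₀ - 1)) = 0 := by linear_combination hroot
    rcases mul_eq_zero.1 h2 with h|h
    · linarith
    · linarith
  obtain ⟨hlo', hhi'⟩ := cb c₀ hc0 hc1 hq
  have hlo : 36504/100000 ≤ c₀ := hlo'.le
  have hhi : c₀ ≤ 36505/100000 := hhi'.le
  -- basic position facts
  have hcN_lo : 36504/100000*N ≤ c₀*N := mul_le_mul_of_nonneg_right hlo (by linarith)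
  have hcN_hi : c₀*N ≤ 36505/100000*N := mul_le_mul_of_nonneg_right hhi (by linarith)
  have hX1_59 : 59/100 ≤ c₀*N - 1/2 := by nlinarith
  have hX1_45 : c₀*N - 1/2 ≤ 45/100*N := by nlinarith
  have hX2_45 : c₀*N ≤ 45/100*N := by nlinarith
  have hX2_59 : 59/100 ≤ c₀*N := by nlinarith
  have hX2_30 : 30/100*N ≤ c₀*N := by nlinarith
  have hX2_N1 : c₀*N ≤ N - 1 := by nlinarith
  have hM2 : (2:ℝ) ≤ N - 1 := by linarith
  -- sqrt facts
  have hu_pos : ∀ x : ℝ, 0 < Real.sqrt (2 * x ^ 2 + 2 * (N - 1) ^ 2) := by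
    intro x
    apply Real.sqrt_pos.2
    nlinarith [sq_nonneg x]
  have hu_sq : ∀ x : ℝ, (Real.sqrt (2 * x ^ 2 + 2 * (N - 1) ^ 2))^2 = 2 * x ^ 2 + 2 * (N - 1) ^ 2 := by
    intro x
    apply Real.sq_sqrt
    nlinarith [sq_nonneg x]
  -- T rewritten
  have hT2 : ∀ x : ℝ, T x = 2*(3*x^5 - 2*N*x^4 + 3*(N-1)^2*x^3 - 3*N*(N-1)^2*x^2 - 2*(N-1)^4*x + N*(N-1)^4) + Real.sqrt (2 * x ^ 2 + 2 * (N - 1) ^ 2) * (4*x^3 - 3*N*x^2 - 2*(N-1)^2*x + N*(N-1)^2) := by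
    intro x
    rw [hT x]
    ring
  -- positivity on [0.59, c₀N - 1/2]
  have key_pos : ∀ x : ℝ, 59/100 ≤ x → x ≤ c₀*N - 1/2 → 0 < T x := by
    intro x h1 h2
    have hx45 : x ≤ 45/100*N := by linarith
    have hW1 : 0 < 3*(c₀*N - 1/2)^5 - 2*N*(c₀*N - 1/2)^4 + 3*(N-1)^2*(c₀*N - 1/2)^3 - 3*N*(N-1)^2*(c₀*N - 1/2)^2 - 2*(N-1)^4*(c₀*N - 1/2) + N*(N-1)^4 := pt_Wx1 c₀ N hN hlo hhi hq
    have hWx : 3*(c₀*N - 1/2)^5 - 2*N*(c₀*N - 1/2)^4 + 3*(N-1)^2*(c₀*N - 1/2)^3 - 3*N*(N-1)^2*(c₀*N - 1/2)^2 - 2*(N-1)^4*(c₀*N - 1/2) + N*(N-1)^4 ≤ 3*x^5 - 2*N*x^4 + 3*(N-1)^2*x^3 - 3*N*(N-1)^2*x^2 - 2*(N-1)^4*x + N*(N-1)^4 := Wmono N x (c₀*N - 1/2) hN h1 h2 hX1_45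
    rw [hT2 x]
    rcases le_or_gt x (30/100*N) with h3|h3
    · have hQ := Qpos N x hN h1 h3
      nlinarith [mul_nonneg (hu_pos x).le hQ.le]
    · have hS1 : 0 < 4*((c₀*N - 1/2)+(N-1))*(3*(c₀*N - 1/2)^5 - 2*N*(c₀*N - 1/2)^4 + 3*(N-1)^2*(c₀*N - 1/2)^3 - 3*N*(N-1)^2*(c₀*N - 1/2)^2 - 2*(N-1)^4*(c₀*N - 1/2) + N*(N-1)^4) + (3*(c₀*N - 1/2)^2+2*(c₀*N - 1/2)*(N-1)+3*(N-1)^2)*(4*(c₀*N - 1/2)^3 - 3*N*(c₀*N - 1/2)^2 - 2*(N-1)^2*(c₀*N - 1/2) + N*(N-1)^2) := pt_Sx1 c₀ N hN hlo hhi hq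
      have hSx : 4*((c₀*N - 1/2)+(N-1))*(3*(c₀*N - 1/2)^5 - 2*N*(c₀*N - 1/2)^4 + 3*(N-1)^2*(c₀*N - 1/2)^3 - 3*N*(N-1)^2*(c₀*N - 1/2)^2 - 2*(N-1)^4*(c₀*N - 1/2) + N*(N-1)^4) + (3*(c₀*N - 1/2)^2+2*(c₀*N - 1/2)*(N-1)+3*(N-1)^2)*(4*(c₀*N - 1/2)^3 - 3*N*(c₀*N - 1/2)^2 - 2*(N-1)^2*(c₀*N - 1/2) + N*(N-1)^2) ≤ 4*(x+(N-1))*(3*x^5 - 2*N*x^4 + 3*(N-1)^2*x^3 - 3*N*(N-1)^2*x^2 - 2*(N-1)^4*x + N*(N-1)^4) + (3*x^2+2*x*(N-1)+3*(N-1)^2)*(4*x^3 - 3*N*x^2 - 2*(N-1)^2*x + N*(N-1)^2) := Smono N x (c₀*N - 1/2) hN h3.le h2 hX1_45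
      exact bridge_pos (N-1) x _ _ _ (by linarith) (hu_pos x) (hu_sq x) (by linarith) (by linarith)
  -- negativity on [c₀N, N-1]
  have key_neg : ∀ x : ℝ, c₀*N ≤ x → x ≤ N - 1 → T x < 0 := by
    intro x h1 h2
    rw [hT2 x]
    rcases le_or_gt x (45/100*N) with h3|h3
    · have hW2 : 3*(c₀*N)^5 - 2*N*(c₀*N)^4 + 3*(N-1)^2*(c₀*N)^3 - 3*N*(N-1)^2*(c₀*N)^2 - 2*(N-1)^4*(c₀*N) + N*(N-1)^4 < 0 := pt_WcN c₀ N hN hlo hhi hq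
      have hS2 : 4*((c₀*N)+(N-1))*(3*(c₀*N)^5 - 2*N*(c₀*N)^4 + 3*(N-1)^2*(c₀*N)^3 - 3*N*(N-1)^2*(c₀*N)^2 - 2*(N-1)^4*(c₀*N) + N*(N-1)^4) + (3*(c₀*N)^2+2*(c₀*N)*(N-1)+3*(N-1)^2)*(4*(c₀*N)^3 - 3*N*(c₀*N)^2 - 2*(N-1)^2*(c₀*N) + N*(N-1)^2) < 0 := pt_ScN c₀ N hN hlo hhi hq
      have hWx : 3*x^5 - 2*N*x^4 + 3*(N-1)^2*x^3 - 3*N*(N-1)^2*x^2 - 2*(N-1)^4*x + N*(N-1)^4 ≤ 3*(c₀*N)^5 - 2*N*(c₀*N)^4 + 3*(N-1)^2*(c₀*N)^3 - 3*N*(N-1)^2*(c₀*N)^2 - 2*(N-1)^4*(c₀*N) + N*(N-1)^4 := Wmono N (c₀*N) x hN hX2_59 h1 h3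
      have hSx : 4*(x+(N-1))*(3*x^5 - 2*N*x^4 + 3*(N-1)^2*x^3 - 3*N*(N-1)^2*x^2 - 2*(N-1)^4*x + N*(N-1)^4) + (3*x^2+2*x*(N-1)+3*(N-1)^2)*(4*x^3 - 3*N*x^2 - 2*(N-1)^2*x + N*(N-1)^2) ≤ 4*((c₀*N)+(N-1))*(3*(c₀*N)^5 - 2*N*(c₀*N)^4 + 3*(N-1)^2*(c₀*N)^3 - 3*N*(N-1)^2*(c₀*N)^2 - 2*(N-1)^4*(c₀*N) + N*(N-1)^4) + (3*(c₀*N)^2+2*(c₀*N)*(N-1)+3*(N-1)^2)*(4*(c₀*N)^3 - 3*N*(c₀*N)^2 - 2*(N-1)^2*(c₀*N) + N*(N-1)^2) := Smono N (c₀*N) x hN hX2_30 h1 h3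
      exact bridge_neg (N-1) x _ _ _ (by linarith) (hu_pos x) (hu_sq x) (by linarith) (by linarith)
    · have hQ : 4*x^3 - 3*N*x^2 - 2*(N-1)^2*x + N*(N-1)^2 < 0 := Qneg N x hN h3.le h2
      have hx0 : (0:ℝ) < x := by linarith
      have hG : 0 ≤ x*(N-x)*((N-1)^2-x^2) := by
        apply mul_nonneg (mul_nonneg hx0.le (by linarith))
        nlinarith
      have hid : 2*(3*x^5 - 2*N*x^4 + 3*(N-1)^2*x^3 - 3*N*(N-1)^2*x^2 - 2*(N-1)^4*x + N*(N-1)^4) = (Real.sqrt (2 * x ^ 2 + 2 * (N - 1) ^ 2))^2 * (4*x^3 - 3*N*x^2 - 2*(N-1)^2*x + N*(N-1)^2) - 2*x*(x*(N-x)*((N-1)^2-x^2)) := by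
        rw [hu_sq x]; ring
      rw [hid]
      nlinarith [mul_pos (by positivity : 0 < (Real.sqrt (2 * x ^ 2 + 2 * (N - 1) ^ 2))^2 + Real.sqrt (2 * x ^ 2 + 2 * (N - 1) ^ 2)) (neg_pos.2 hQ), mul_nonneg hx0.le hG]
  constructor
  · -- existence via IVT
    have hcont : ContinuousOn T (Set.Icc (c₀*N - 1/2) (c₀*N)) := by
      have hfun : T = fun δ : ℝ =>
        6 * δ ^ 5 - 4 * N * δ ^ 4 + 6 * (N - 1) ^ 2 * δ ^ 3
          - 6 * N * (N - 1) ^ 2 * δ ^ 2 - 4 * (N - 1) ^ 4 * δ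
          + 2 * N * (N - 1) ^ 4
          + Real.sqrt (2 * δ ^ 2 + 2 * (N - 1) ^ 2) *
              (4 * δ ^ 3 - 3 * N * δ ^ 2 - 2 * (N - 1) ^ 2 * δ + N * (N - 1) ^ 2) := funext hT
      rw [hfun]
      apply Continuous.continuousOn
      continuity
    have h1 : 0 < T (c₀*N - 1/2) := key_pos _ hX1_59 le_rfl
    have h2 : T (c₀*N) < 0 := key_neg _ le_rfl hX2_N1
    have hsub := intermediate_value_Ioo' (by linarith : c₀*N - 1/2 ≤ c₀*N) hcont
    obtain ⟨x, hx, hTx⟩ := hsub (Set.mem_Ioo.2 ⟨h2, h1⟩)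
    exact ⟨x, hx, hTx⟩
  · intro x hx hTx
    obtain ⟨hx1, hx2⟩ := hx
    constructor
    · by_contra hcon
      push_neg at hcon
      have := key_pos x (by linarith) hcon
      linarith
    · by_contra hcon
      push_neg at hcon
      have := key_neg x hcon hx2
      linarith
end

section
/- Let n ≥ 3 be an integer and define T : ℝ → ℝ by T(δ) = 6δ⁵ − 4nδ⁴ + 6(n−1)²δ³ − 6n(n−1)²δ² − 4(n−1)⁴δ + 2n(n−1)⁴ + √(2δ² + 2(n−1)²) · (4δ³ − 3nδ² − 2(n−1)²δ + n(n−1)²). Then T(c₀n) < 0 and T(c₀n − 1/2) > 0. -/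
private lemma aux_cbounds (c : ℝ) (hc0 : 0 < c) (hc1 : c < 1)
    (hq : 6*c^4 + 2*c^3 + 8*c^2 + 2*c - 2 = 0) : (0.36:ℝ) < c ∧ c < 0.37 := by
  constructor
  · nlinarith [hq, sq_nonneg c, sq_nonneg (c - 0.36), mul_pos hc0 hc0,
      mul_nonneg (sq_nonneg c) hc0.le, mul_nonneg (mul_nonneg hc0.le hc0.le) hc0.le]
  · nlinarith [hq, sq_nonneg c, sq_nonneg (c - 0.37), mul_pos hc0 hc0,
      mul_nonneg (sq_nonneg c) hc0.le, mul_nonneg (mul_nonneg hc0.le hc0.le) hc0.le]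

private lemma aux_Eneg (c N : ℝ) (hcl : (0.36:ℝ) < c) (hcu : c < 0.37) (hN : (3:ℝ) ≤ N) :
    N^2 * (6*c^2 - 6*c^3 + 8*c - 4) + (2 - 4*c) * (2*N - 1) ≤ -0.14 * N^2 := by
  have hN0 : (0:ℝ) < N := by linarith
  have hg : 6*c^2 - 6*c^3 + 8*c - 4 ≤ -0.52 := by
    nlinarith [mul_nonneg (sub_nonneg.2 hcl.le) (sub_nonneg.2 hcu.le),
      mul_nonneg (mul_nonneg (sub_nonneg.2 hcl.le) (sub_nonneg.2 hcu.le)) (sub_nonneg.2 hcu.le)]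
  nlinarith [mul_nonneg (sq_nonneg N) (sub_nonneg.2 hg),
    mul_nonneg (sub_nonneg.2 hN) hN0.le,
    mul_nonneg (mul_nonneg (sub_nonneg.2 hN) hN0.le) (sub_nonneg.2 hcu.le),
    mul_nonneg (sub_nonneg.2 hcl.le) hN0.le]

private lemma aux_Gbounds (c N : ℝ) (hcl : (0.36:ℝ) < c) (hcu : c < 0.37) (hN : (3:ℝ) ≤ N) :
    -0.094 * N^2 ≤ N^2 * (4*c^3 - 3*c^2) + (1 - 2*c) * (N - 1)^2 ∧
      N^2 * (4*c^3 - 3*c^2) + (1 - 2*c) * (N - 1)^2 ≤ 0.094 * N^2 := by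
  have hh1u : 4*c^3 - 3*c^2 ≤ -0.202 := by
    nlinarith [mul_nonneg (sub_nonneg.2 hcl.le) (sub_nonneg.2 hcu.le),
      mul_nonneg (mul_nonneg (sub_nonneg.2 hcl.le) (sub_nonneg.2 hcu.le)) (sub_nonneg.2 hcu.le)]
  have hh1l : (-0.209:ℝ) ≤ 4*c^3 - 3*c^2 := by
    nlinarith [mul_nonneg (sub_nonneg.2 hcl.le) (sub_nonneg.2 hcu.le),
      mul_nonneg (mul_nonneg (sub_nonneg.2 hcl.le) (sub_nonneg.2 hcu.le)) (sub_nonneg.2 hcu.le)]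
  have hNm1 : (N - 1)^2 ≤ N^2 := by nlinarith
  have hNm2 : (4/9) * N^2 ≤ (N - 1)^2 := by nlinarith [sq_nonneg (N-3)]
  constructor
  · nlinarith [mul_nonneg (sq_nonneg N) (sub_nonneg.2 hh1l),
      mul_nonneg (sub_nonneg.2 hNm2) (sub_nonneg.2 (by linarith : (0.26:ℝ) ≤ 1 - 2*c))]
  · nlinarith [mul_nonneg (sq_nonneg N) (sub_nonneg.2 hh1u),
      mul_nonneg (sub_nonneg.2 hNm1) (sub_nonneg.2 (by linarith : 1 - 2*c ≤ 0.28))]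

set_option maxHeartbeats 800000 in
/-- The main squared comparison for the first part. -/
private lemma aux_key1 (c N : ℝ) (hcl : (0.36:ℝ) < c) (hcu : c < 0.37) (hN : (3:ℝ) ≤ N)
    (s : ℝ) (hs2 : s ^ 2 = 2 * (c*N) ^ 2 + 2 * (N - 1) ^ 2) :
    (2*N - 1) * N * (N^2 * (6*c^2 - 6*c^3 + 8*c - 4) + (2 - 4*c) * (2*N - 1)) < 0 ∧
    (s * (N * (N^2 * (4*c^3 - 3*c^2) + (1 - 2*c) * (N - 1)^2)))^2 <
      (-((2*N - 1) * N * (N^2 * (6*c^2 - 6*c^3 + 8*c - 4) + (2 - 4*c) * (2*N - 1))))^2 := by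
  have hN0 : (0:ℝ) < N := by linarith
  set E : ℝ := N^2 * (6*c^2 - 6*c^3 + 8*c - 4) + (2 - 4*c) * (2*N - 1) with hEdef
  set G : ℝ := N^2 * (4*c^3 - 3*c^2) + (1 - 2*c) * (N - 1)^2 with hGdef
  have hE : E ≤ -0.14 * N^2 := aux_Eneg c N hcl hcu hN
  obtain ⟨hGl, hGu⟩ := aux_Gbounds c N hcl hcu hN
  have hPneg : (2*N - 1) * N * E < 0 := by nlinarith [hE, sq_nonneg N]
  refine ⟨hPneg, ?_⟩
  have hG2 : G^2 ≤ (0.094)^2 * N^4 := by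
    nlinarith [mul_nonneg (sub_nonneg.2 hGu) (sub_nonneg.2 hGl)]
  have hE2 : (0.14)^2 * N^4 ≤ E^2 := by
    have h1 : (0:ℝ) ≤ 0.14 * N^2 := by positivity
    have h2 : 0.14 * N^2 ≤ -E := by linarith
    nlinarith [pow_le_pow_left₀ h1 h2 2]
  have hs2b : s^2 ≤ 2.274 * N^2 := by
    rw [hs2]
    have hc2 : c^2 ≤ 0.1369 := by nlinarith [mul_nonneg (sub_nonneg.2 hcl.le) (sub_nonneg.2 hcu.le)]
    have hNm1 : (N - 1)^2 ≤ N^2 := by nlinarith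
    nlinarith [mul_nonneg (sq_nonneg N) (sub_nonneg.2 hc2)]
  have e1 : (s * (N * G))^2 = s^2 * (N^2 * G^2) := by ring
  have e2 : (-((2*N - 1) * N * E))^2 = (2*N - 1)^2 * (N^2 * E^2) := by ring
  rw [e1, e2]
  have b1 : s^2 * (N^2 * G^2) ≤ 2.274 * N^2 * (N^2 * ((0.094)^2 * N^4)) := by
    calc s^2 * (N^2 * G^2) ≤ 2.274 * N^2 * (N^2 * G^2) :=
          mul_le_mul_of_nonneg_right hs2b (by positivity)
      _ ≤ 2.274 * N^2 * (N^2 * ((0.094)^2 * N^4)) :=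
          mul_le_mul_of_nonneg_left (mul_le_mul_of_nonneg_left hG2 (sq_nonneg N)) (by positivity)
  have b2 : 2.274 * N^2 * (N^2 * ((0.094)^2 * N^4)) < (25/9) * N^2 * (N^2 * ((0.14)^2 * N^4)) := by
    have hN8 : (0:ℝ) < N^8 := by positivity
    nlinarith [hN8]
  have b3 : (25/9) * N^2 * (N^2 * ((0.14)^2 * N^4)) ≤ (2*N - 1)^2 * (N^2 * E^2) := by
    have h2N : (25/9) * N^2 ≤ (2*N - 1)^2 := by nlinarith [sq_nonneg (N-3)]
    calc (25/9) * N^2 * (N^2 * ((0.14)^2 * N^4))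
        ≤ (2*N - 1)^2 * (N^2 * ((0.14)^2 * N^4)) :=
          mul_le_mul_of_nonneg_right h2N (by positivity)
      _ ≤ (2*N - 1)^2 * (N^2 * E^2) :=
          mul_le_mul_of_nonneg_left (mul_le_mul_of_nonneg_left hE2 (sq_nonneg N)) (by positivity)
  exact b1.trans_lt (b2.trans_le b3)

/-- Positivity of the reduced polynomial part for the second claim. -/
private lemma aux_P2 (c N : ℝ) (hcl : (0.36:ℝ) < c) (hcu : c < 0.37) (hN : (3:ℝ) ≤ N) :
    0 < N^4 * (-15*c^4 - 4*c^3 + 3*c^2 + 22*c - 6)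
        + N^3 * (21*c^3 + 6*c^2 - 63/2*c + 5/2)
        + N^2 * (-33/2*c^2 + 15*c + 25/4)
        + N * (19/8*c - 25/4) + 17/16 := by
  have hN0 : (0:ℝ) < N := by linarith
  have hr4 : (1.86:ℝ) ≤ -15*c^4 - 4*c^3 + 3*c^2 + 22*c - 6 := by
    nlinarith [mul_nonneg (sub_nonneg.2 hcl.le) (sub_nonneg.2 hcu.le),
      sq_nonneg (c - 0.36),
      mul_nonneg (mul_nonneg (sub_nonneg.2 hcl.le) (sub_nonneg.2 hcu.le)) (sub_nonneg.2 hcu.le),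
      mul_nonneg (mul_nonneg (sub_nonneg.2 hcl.le) (sub_nonneg.2 hcu.le))
        (mul_nonneg (sub_nonneg.2 hcl.le) (sub_nonneg.2 hcu.le)), sq_nonneg c]
  have hr3 : (-7.28:ℝ) ≤ 21*c^3 + 6*c^2 - 63/2*c + 5/2 := by
    nlinarith [mul_nonneg (sub_nonneg.2 hcl.le) (sub_nonneg.2 hcu.le),
      mul_nonneg (mul_nonneg (sub_nonneg.2 hcl.le) (sub_nonneg.2 hcu.le)) (sub_nonneg.2 hcu.le),
      sq_nonneg (c - 0.37)]
  have hr2 : (9.5:ℝ) ≤ -33/2*c^2 + 15*c + 25/4 := by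
    nlinarith [mul_nonneg (sub_nonneg.2 hcl.le) (sub_nonneg.2 hcu.le)]
  have hr1 : (-5.4:ℝ) ≤ 19/8*c - 25/4 := by linarith
  nlinarith [mul_nonneg (sub_nonneg.2 hr4) (by positivity : (0:ℝ) ≤ N^4),
    mul_nonneg (sub_nonneg.2 hr3) (by positivity : (0:ℝ) ≤ N^3),
    mul_nonneg (sub_nonneg.2 hr2) (sq_nonneg N),
    mul_nonneg (sub_nonneg.2 hr1) hN0.le,
    mul_nonneg (mul_nonneg (sq_nonneg (N - 2)) hN0.le) hN0.le,
    mul_nonneg (sub_nonneg.2 hN) hN0.le,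
    mul_nonneg (mul_nonneg (sub_nonneg.2 hN) hN0.le) hN0.le,
    mul_nonneg (mul_nonneg (mul_nonneg (sub_nonneg.2 hN) hN0.le) hN0.le) hN0.le]

/-- Positivity of the coefficient of the square root for the second claim. -/
private lemma aux_Q2 (c N : ℝ) (hcl : (0.36:ℝ) < c) (hcu : c < 0.37) (hN : (3:ℝ) ≤ N) :
    0 < 4 * (c*N - 1/2) ^ 3 - 3 * N * (c*N - 1/2) ^ 2 - 2 * (N - 1) ^ 2 * (c*N - 1/2)
        + N * (N - 1) ^ 2 := by
  have hN0 : (0:ℝ) < N := by linarith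
  have ha3 : (0.0519:ℝ) ≤ 4*c^3 - 3*c^2 - 2*c + 1 := by
    nlinarith [mul_nonneg (sub_nonneg.2 hcl.le) (sub_nonneg.2 hcu.le),
      mul_nonneg (mul_nonneg (sub_nonneg.2 hcl.le) (sub_nonneg.2 hcu.le)) (sub_nonneg.2 hcu.le),
      sq_nonneg (c - 0.37)]
  have ha2 : (0.74:ℝ) ≤ -6*c^2 + 7*c - 1 := by
    nlinarith [mul_nonneg (sub_nonneg.2 hcl.le) (sub_nonneg.2 hcu.le)]
  nlinarith [mul_nonneg (sub_nonneg.2 ha3) (by positivity : (0:ℝ) ≤ N^3),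
    mul_nonneg (sub_nonneg.2 ha2) (sq_nonneg N),
    mul_nonneg (sub_nonneg.2 hN) hN0.le, hcl, hcu,
    mul_nonneg (mul_nonneg (sub_nonneg.2 hN) hN0.le) hN0.le]

/-- For `n ≥ 3`, the function `T` (the numerator of the derivative of
`F(δ) = δ(n−δ)((n−1)² − δ²)/(√2 + 2√((n−1)² + δ²))`) satisfies `T(c₀n) < 0` and
`T(c₀n − 1/2) > 0`, where `c₀` is the unique root in `(0,1)` of
`6c⁵ − 4c⁴ + 6c³ − 6c² − 4c + 2 = 0`. -/
theorem T_sign_at_c0n (n : ℕ) (hn : 3 ≤ n)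
    (c₀ : ℝ) (hc₀ : c₀ ∈ Set.Ioo (0 : ℝ) 1)
    (hroot : 6 * c₀ ^ 5 - 4 * c₀ ^ 4 + 6 * c₀ ^ 3 - 6 * c₀ ^ 2 - 4 * c₀ + 2 = 0)
    (T : ℝ → ℝ)
    (hT : ∀ δ : ℝ, T δ =
      6 * δ ^ 5 - 4 * (n : ℝ) * δ ^ 4 + 6 * ((n : ℝ) - 1) ^ 2 * δ ^ 3
        - 6 * (n : ℝ) * ((n : ℝ) - 1) ^ 2 * δ ^ 2 - 4 * ((n : ℝ) - 1) ^ 4 * δ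
        + 2 * (n : ℝ) * ((n : ℝ) - 1) ^ 4
        + Real.sqrt (2 * δ ^ 2 + 2 * ((n : ℝ) - 1) ^ 2) *
            (4 * δ ^ 3 - 3 * (n : ℝ) * δ ^ 2 - 2 * ((n : ℝ) - 1) ^ 2 * δ
              + (n : ℝ) * ((n : ℝ) - 1) ^ 2)) :
    T (c₀ * n) < 0 ∧ T (c₀ * n - 1 / 2) > 0 := by
  obtain ⟨hc0, hc1⟩ := hc₀
  have hN : (3:ℝ) ≤ (n:ℝ) := by exact_mod_cast hn
  set N : ℝ := (n:ℝ) with hNdef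
  have hN0 : (0:ℝ) < N := by linarith
  have hq : 6*c₀^4 + 2*c₀^3 + 8*c₀^2 + 2*c₀ - 2 = 0 := by
    have h1 : (c₀ - 1) * (6*c₀^4 + 2*c₀^3 + 8*c₀^2 + 2*c₀ - 2) = 0 := by
      linear_combination hroot
    rcases mul_eq_zero.1 h1 with h | h
    · exfalso; linarith
    · exact h
  obtain ⟨hcl, hcu⟩ := aux_cbounds c₀ hc0 hc1 hq
  constructor
  · -- T (c₀ * N) < 0
    rw [hT]
    have harg : (0:ℝ) ≤ 2 * (c₀*N) ^ 2 + 2 * (N - 1) ^ 2 := by positivity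
    set s := Real.sqrt (2 * (c₀*N) ^ 2 + 2 * (N - 1) ^ 2) with hs
    have hs0 : 0 ≤ s := Real.sqrt_nonneg _
    have hs2 : s ^ 2 = 2 * (c₀*N) ^ 2 + 2 * (N - 1) ^ 2 := Real.sq_sqrt harg
    obtain ⟨hPneg, key⟩ := aux_key1 c₀ N hcl hcu hN s hs2
    set E : ℝ := N^2 * (6*c₀^2 - 6*c₀^3 + 8*c₀ - 4) + (2 - 4*c₀) * (2*N - 1) with hEdef
    set G : ℝ := N^2 * (4*c₀^3 - 3*c₀^2) + (1 - 2*c₀) * (N - 1)^2 with hGdef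
    have hrw : 6 * (c₀*N) ^ 5 - 4 * N * (c₀*N) ^ 4 + 6 * (N - 1) ^ 2 * (c₀*N) ^ 3
        - 6 * N * (N - 1) ^ 2 * (c₀*N) ^ 2 - 4 * (N - 1) ^ 4 * (c₀*N)
        + 2 * N * (N - 1) ^ 4
        + s * (4 * (c₀*N) ^ 3 - 3 * N * (c₀*N) ^ 2 - 2 * (N - 1) ^ 2 * (c₀*N)
            + N * (N - 1) ^ 2)
        = (2*N - 1) * N * E + s * (N * G) := by
      rw [hEdef, hGdef]; linear_combination N^5 * hroot
    rw [hrw]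
    rcases le_or_gt (N * G) 0 with hng | hng
    · have : s * (N * G) ≤ 0 := mul_nonpos_of_nonneg_of_nonpos hs0 hng
      linarith
    · have hlt : s * (N * G) < -((2*N - 1) * N * E) :=
        lt_of_pow_lt_pow_left₀ 2 (by linarith) key
      linarith
  · -- T (c₀ * N - 1/2) > 0
    rw [hT]
    have hs0 : 0 ≤ Real.sqrt (2 * (c₀*N - 1/2) ^ 2 + 2 * (N - 1) ^ 2) := Real.sqrt_nonneg _
    set s := Real.sqrt (2 * (c₀*N - 1/2) ^ 2 + 2 * (N - 1) ^ 2) with hs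
    have hP : 0 < 6 * (c₀*N - 1/2) ^ 5 - 4 * N * (c₀*N - 1/2) ^ 4
        + 6 * (N - 1) ^ 2 * (c₀*N - 1/2) ^ 3
        - 6 * N * (N - 1) ^ 2 * (c₀*N - 1/2) ^ 2 - 4 * (N - 1) ^ 4 * (c₀*N - 1/2)
        + 2 * N * (N - 1) ^ 4 := by
      have hrw : 6 * (c₀*N - 1/2) ^ 5 - 4 * N * (c₀*N - 1/2) ^ 4
          + 6 * (N - 1) ^ 2 * (c₀*N - 1/2) ^ 3
          - 6 * N * (N - 1) ^ 2 * (c₀*N - 1/2) ^ 2 - 4 * (N - 1) ^ 4 * (c₀*N - 1/2)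
          + 2 * N * (N - 1) ^ 4
          = N^4 * (-15*c₀^4 - 4*c₀^3 + 3*c₀^2 + 22*c₀ - 6)
            + N^3 * (21*c₀^3 + 6*c₀^2 - 63/2*c₀ + 5/2)
            + N^2 * (-33/2*c₀^2 + 15*c₀ + 25/4)
            + N * (19/8*c₀ - 25/4) + 17/16 := by
        linear_combination N^5 * hroot
      rw [hrw]
      exact aux_P2 c₀ N hcl hcu hN
    have hQ : 0 < 4 * (c₀*N - 1/2) ^ 3 - 3 * N * (c₀*N - 1/2) ^ 2
        - 2 * (N - 1) ^ 2 * (c₀*N - 1/2) + N * (N - 1) ^ 2 :=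
      aux_Q2 c₀ N hcl hcu hN
    positivity
end

section
/- For every integer n ≥ 3, the quartic polynomial T_u'(δ) = 30δ⁴ − 16nδ³ + (18n² − 12n − 6)δ² + (−12n³ + 12n²)δ − 4n⁴ + 12n³ − 12n² + 4n has exactly one positive real root. Moreover T_u'(0) < 0, so the quintic T_u(δ) = 6δ⁵ − 4nδ⁴ + (6n² − 4n − 2)δ³ + (−6n³ + 6n²)δ² + (−4n⁴ + 12n³ − 12n² + 4n)δ + 2n⁵ − 6n⁴ + 6n³ − 2n² is strictly decreasing on [0, x₀] and strictly increasing on [x₀, ∞), where x₀ is that unique positive root. -/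
/-!
`T_u'` is strictly convex, since its second derivative `360δ² - 96nδ + 36n² - 24n - 12` has
negative discriminant; it is negative at `0` and positive at `n`. A convex function that is
negative at `0` can vanish on `(0, ∞)` only once, crossing from negative to positive values. So
the intermediate value theorem gives exactly one positive root `x₀`, with `T_u' < 0` on `(0, x₀)`
and `T_u' > 0` on `(x₀, ∞)`, and `T_u' = (T_u)'` gives the monotonicity of `T_u`.
-/

open Set

theorem hasDerivAt_quintic (a b c d e f x : ℝ) :
    HasDerivAt (fun δ ↦ a * δ ^ 5 + b * δ ^ 4 + c * δ ^ 3 + d * δ ^ 2 + e * δ + f)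
      (5 * a * x ^ 4 + 4 * b * x ^ 3 + 3 * c * x ^ 2 + 2 * d * x + e) x := by
  have h := (((((hasDerivAt_pow 5 x).const_mul a).add ((hasDerivAt_pow 4 x).const_mul b)).add
    ((hasDerivAt_pow 3 x).const_mul c)).add ((hasDerivAt_pow 2 x).const_mul d)).add
    ((hasDerivAt_id' x).const_mul e) |>.add_const f
  refine h.congr_deriv ?_
  push_cast
  ring

section ConvexOn

variable {s : Set ℝ} {f : ℝ → ℝ} {a x y : ℝ}

theorem ConvexOn.neg_of_mem_Ioo (hf : ConvexOn ℝ s f) (ha : a ∈ s) (hy : y ∈ s) (hfa : f a < 0)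
    (hfy : f y ≤ 0) (hx : x ∈ Ioo a y) : f x < 0 := by
  by_contra! hfx
  exact (hf.lt_right_of_left_lt ha hy (Ioo_subset_openSegment hx) (hfa.trans_le hfx)).not_ge
    (hfy.trans hfx)

theorem ConvexOn.pos_of_lt (hf : ConvexOn ℝ s f) (ha : a ∈ s) (hx : x ∈ s) (hfa : f a < 0)
    (hfy : 0 ≤ f y) (hy : y ∈ Ioo a x) : 0 < f x := by
  by_contra! hfx
  exact (hf.neg_of_mem_Ioo ha hx hfa hfx hy).not_ge hfy

theorem ConvexOn.existsUnique_root {b : ℝ} (hf : ConvexOn ℝ (Ici a) f)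
    (hcont : ContinuousOn f (Icc a b)) (hfa : f a < 0) (hfb : 0 < f b) (hab : a ≤ b) :
    ∃! x, a < x ∧ f x = 0 := by
  obtain ⟨x, hx, hfx⟩ := intermediate_value_Ioo hab hcont ⟨hfa, hfb⟩
  refine ⟨x, ⟨hx.1, hfx⟩, fun y ⟨hay, hfy⟩ ↦ ?_⟩
  rcases lt_trichotomy y x with hyx | rfl | hxy
  · exact absurd hfy (hf.neg_of_mem_Ioo self_mem_Ici hx.1.le hfa hfx.le ⟨hay, hyx⟩).ne
  · rfl
  · exact absurd hfx (hf.neg_of_mem_Ioo self_mem_Ici hay.le hfa hfy.le ⟨hx.1, hxy⟩).ne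

theorem ConvexOn.strictAntiOn_strictMonoOn_of_hasDerivAt {F : ℝ → ℝ} {x₀ : ℝ}
    (hf : ConvexOn ℝ (Ici a) f) (hF : ∀ x, HasDerivAt F (f x) x) (hfa : f a < 0) (hax₀ : a < x₀)
    (hfx₀ : f x₀ = 0) : StrictAntiOn F (Icc a x₀) ∧ StrictMonoOn F (Ici x₀) := by
  have hFcont : Continuous F := continuous_iff_continuousAt.2 fun x ↦ (hF x).continuousAt
  constructor
  · refine strictAntiOn_of_deriv_neg (convex_Icc a x₀) hFcont.continuousOn fun x hx ↦ ?_
    rw [interior_Icc] at hx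
    rw [(hF x).deriv]
    exact hf.neg_of_mem_Ioo self_mem_Ici hax₀.le hfa hfx₀.le hx
  · refine strictMonoOn_of_deriv_pos (convex_Ici x₀) hFcont.continuousOn fun x hx ↦ ?_
    rw [interior_Ici] at hx
    rw [(hF x).deriv]
    exact hf.pos_of_lt self_mem_Ici (hax₀.trans hx).le hfa hfx₀.ge ⟨hax₀, hx⟩

end ConvexOn

section Tu

variable {c : ℝ}

def tuQuintic (c δ : ℝ) : ℝ :=
  6 * δ ^ 5 - 4 * c * δ ^ 4 + (6 * c ^ 2 - 4 * c - 2) * δ ^ 3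
    + (-6 * c ^ 3 + 6 * c ^ 2) * δ ^ 2
    + (-4 * c ^ 4 + 12 * c ^ 3 - 12 * c ^ 2 + 4 * c) * δ
    + 2 * c ^ 5 - 6 * c ^ 4 + 6 * c ^ 3 - 2 * c ^ 2

def tuQuartic (c δ : ℝ) : ℝ :=
  30 * δ ^ 4 - 16 * c * δ ^ 3 + (18 * c ^ 2 - 12 * c - 6) * δ ^ 2
    + (-12 * c ^ 3 + 12 * c ^ 2) * δ
    - 4 * c ^ 4 + 12 * c ^ 3 - 12 * c ^ 2 + 4 * c

theorem hasDerivAt_tuQuintic (c x : ℝ) : HasDerivAt (tuQuintic c) (tuQuartic c x) x := by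
  convert hasDerivAt_quintic 6 (-4 * c) (6 * c ^ 2 - 4 * c - 2) (-6 * c ^ 3 + 6 * c ^ 2)
    (-4 * c ^ 4 + 12 * c ^ 3 - 12 * c ^ 2 + 4 * c) (2 * c ^ 5 - 6 * c ^ 4 + 6 * c ^ 3 - 2 * c ^ 2)
    x using 1
  · funext δ; unfold tuQuintic; ring
  · unfold tuQuartic; ring

def tuCubic (c δ : ℝ) : ℝ :=
  120 * δ ^ 3 - 48 * c * δ ^ 2 + (36 * c ^ 2 - 24 * c - 12) * δ - 12 * c ^ 3 + 12 * c ^ 2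

theorem hasDerivAt_tuQuartic (c x : ℝ) : HasDerivAt (tuQuartic c) (tuCubic c x) x := by
  convert hasDerivAt_quintic 0 30 (-16 * c) (18 * c ^ 2 - 12 * c - 6) (-12 * c ^ 3 + 12 * c ^ 2)
    (-4 * c ^ 4 + 12 * c ^ 3 - 12 * c ^ 2 + 4 * c) x using 1
  · funext δ; unfold tuQuartic; ring
  · unfold tuCubic; ring

theorem hasDerivAt_tuCubic (c x : ℝ) :
    HasDerivAt (tuCubic c) (360 * x ^ 2 - 96 * c * x + (36 * c ^ 2 - 24 * c - 12)) x := by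
  convert hasDerivAt_quintic 0 0 120 (-48 * c) (36 * c ^ 2 - 24 * c - 12)
    (-12 * c ^ 3 + 12 * c ^ 2) x using 1
  · funext δ; unfold tuCubic; ring
  · ring

theorem strictConvexOn_tuQuartic (hc : 2 ≤ c) : StrictConvexOn ℝ univ (tuQuartic c) := by
  have hderiv : deriv (tuQuartic c) = tuCubic c :=
    funext fun x ↦ (hasDerivAt_tuQuartic c x).deriv
  refine strictConvexOn_univ_of_deriv2_pos
    (continuous_iff_continuousAt.2 fun x ↦ (hasDerivAt_tuQuartic c x).continuousAt) fun x ↦ ?_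
  rw [Function.iterate_succ_apply', Function.iterate_one, hderiv, (hasDerivAt_tuCubic c x).deriv]
  nlinarith [sq_nonneg (15 * x - 2 * c)]

theorem tuQuartic_zero_neg (hc : 1 < c) : tuQuartic c 0 < 0 := by
  have h : tuQuartic c 0 = -(4 * c * (c - 1) ^ 3) := by unfold tuQuartic; ring
  rw [h, neg_lt_zero]
  exact mul_pos (by linarith) (pow_pos (sub_pos.2 hc) 3)

theorem tuQuartic_self_pos (hc : 1 ≤ c) : 0 < tuQuartic c c := by
  unfold tuQuartic
  nlinarith [pow_pos (by linarith : (0 : ℝ) < c) 3]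

end Tu

/-- For `n ≥ 3`, the quartic `T_u'` has exactly one positive real root `x₀`, satisfies
`T_u'(0) < 0`, and consequently the quintic `T_u` is strictly decreasing on `[0, x₀]` and
strictly increasing on `[x₀, ∞)`. -/
theorem Tu_monotone (n : ℕ) (hn : 3 ≤ n)
    (Tu' : ℝ → ℝ)
    (hTu' : ∀ δ : ℝ, Tu' δ =
      30 * δ ^ 4 - 16 * (n : ℝ) * δ ^ 3 + (18 * (n : ℝ) ^ 2 - 12 * (n : ℝ) - 6) * δ ^ 2
        + (-12 * (n : ℝ) ^ 3 + 12 * (n : ℝ) ^ 2) * δ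
        - 4 * (n : ℝ) ^ 4 + 12 * (n : ℝ) ^ 3 - 12 * (n : ℝ) ^ 2 + 4 * (n : ℝ))
    (Tu : ℝ → ℝ)
    (hTu : ∀ δ : ℝ, Tu δ =
      6 * δ ^ 5 - 4 * (n : ℝ) * δ ^ 4 + (6 * (n : ℝ) ^ 2 - 4 * (n : ℝ) - 2) * δ ^ 3
        + (-6 * (n : ℝ) ^ 3 + 6 * (n : ℝ) ^ 2) * δ ^ 2
        + (-4 * (n : ℝ) ^ 4 + 12 * (n : ℝ) ^ 3 - 12 * (n : ℝ) ^ 2 + 4 * (n : ℝ)) * δ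
        + 2 * (n : ℝ) ^ 5 - 6 * (n : ℝ) ^ 4 + 6 * (n : ℝ) ^ 3 - 2 * (n : ℝ) ^ 2) :
    (∃! x : ℝ, 0 < x ∧ Tu' x = 0) ∧ Tu' 0 < 0 ∧
    (∀ x₀ : ℝ, 0 < x₀ → Tu' x₀ = 0 →
      StrictAntiOn Tu (Set.Icc 0 x₀) ∧ StrictMonoOn Tu (Set.Ici x₀)) := by
  have hc : (3 : ℝ) ≤ n := by exact_mod_cast hn
  obtain rfl : Tu' = tuQuartic n := funext hTu'
  obtain rfl : Tu = tuQuintic n := funext hTu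
  have hconv : ConvexOn ℝ (Ici 0) (tuQuartic n) :=
    (strictConvexOn_tuQuartic (by linarith)).convexOn.subset (subset_univ _) (convex_Ici 0)
  have hneg : tuQuartic n 0 < 0 := tuQuartic_zero_neg (by linarith)
  have hcont : Continuous (tuQuartic n) :=
    continuous_iff_continuousAt.2 fun x ↦ (hasDerivAt_tuQuartic n x).continuousAt
  refine ⟨hconv.existsUnique_root hcont.continuousOn hneg (tuQuartic_self_pos (by linarith))
    n.cast_nonneg, hneg, fun x₀ hx₀ hroot ↦ ?_⟩
  exact hconv.strictAntiOn_strictMonoOn_of_hasDerivAt (hasDerivAt_tuQuintic n) hneg hx₀ hroot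
end

section
/- For every integer n ≥ 3, the quartic polynomial T_l'(δ) = 30δ⁴ − 16nδ³ + (18n² − 36n + 12√2 n − 12√2 + 18)δ² + (−12n³ − 6√2 n² + 24n² − 12n + 6√2 n)δ − 4n⁴ − 2√2 n³ + 16n³ − 24n² + 6√2 n² − 6√2 n + 16n − 4 + 2√2 has exactly one positive real root, and T_l'(0) < 0. -/
/-- Auxiliary: the "second divided difference" quadratic is positive. -/
lemma Tl'_aux_Q_pos (m s x y : ℝ) (hm : 3 ≤ m) (hs : 1 ≤ s)
    (hx : 0 < x) (hxy : x < y) :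
    0 < 30 * (x ^ 2 + x * y + y ^ 2) - 16 * m * (x + y)
        + (18 * m ^ 2 - 36 * m + 12 * s * m - 12 * s + 18) := by
  nlinarith [sq_nonneg (x - y), sq_nonneg (45 * (x + y) - 16 * m), sq_nonneg m,
    mul_pos hx (hx.trans hxy), sq_nonneg (x + y)]

set_option maxHeartbeats 1000000 in
/-- For `n ≥ 3`, the quartic `T_l'` (the derivative of the lower-bound polynomial `T_l`)
has exactly one positive real root, and `T_l'(0) < 0`. -/
theorem Tl'_unique_positive_root (n : ℕ) (hn : 3 ≤ n)
    (Tl' : ℝ → ℝ)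
    (hTl' : ∀ δ : ℝ, Tl' δ =
      30 * δ ^ 4 - 16 * (n : ℝ) * δ ^ 3
        + (18 * (n : ℝ) ^ 2 - 36 * (n : ℝ) + 12 * Real.sqrt 2 * (n : ℝ)
            - 12 * Real.sqrt 2 + 18) * δ ^ 2
        + (-12 * (n : ℝ) ^ 3 - 6 * Real.sqrt 2 * (n : ℝ) ^ 2 + 24 * (n : ℝ) ^ 2
            - 12 * (n : ℝ) + 6 * Real.sqrt 2 * (n : ℝ)) * δ
        - 4 * (n : ℝ) ^ 4 - 2 * Real.sqrt 2 * (n : ℝ) ^ 3 + 16 * (n : ℝ) ^ 3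
        - 24 * (n : ℝ) ^ 2 + 6 * Real.sqrt 2 * (n : ℝ) ^ 2 - 6 * Real.sqrt 2 * (n : ℝ)
        + 16 * (n : ℝ) - 4 + 2 * Real.sqrt 2) :
    (∃! x : ℝ, 0 < x ∧ Tl' x = 0) ∧ Tl' 0 < 0 := by
  set s : ℝ := Real.sqrt 2 with hsdef
  have hs0 : 0 ≤ s := Real.sqrt_nonneg 2
  have hs2 : s ^ 2 = 2 := Real.sq_sqrt (by norm_num)
  have hs1 : 1 ≤ s := by nlinarith
  have hs15 : s ≤ 3 / 2 := by nlinarith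
  set m : ℝ := (n : ℝ) with hmdef
  have hm : 3 ≤ m := by rw [hmdef]; exact_mod_cast hn
  -- value at 0
  have h0 : Tl' 0 < 0 := by
    rw [hTl' 0]
    nlinarith [mul_nonneg hs0 (sq_nonneg m), mul_nonneg hs0 (by linarith : (0:ℝ) ≤ m), sq_nonneg ((m-1)^2), sq_nonneg (m-1)]
  -- value at m
  have hmpos : (0 : ℝ) < m := by linarith
  have hvm : 0 < Tl' m := by
    rw [hTl' m]
    nlinarith [mul_nonneg hs0 (sq_nonneg m), mul_nonneg hs0 hmpos.le,
      mul_nonneg (mul_nonneg hs0 hmpos.le) (mul_nonneg hmpos.le hmpos.le), sq_nonneg m]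
  -- continuity
  have hcont : Continuous Tl' := by
    have : Tl' = fun δ : ℝ =>
      30 * δ ^ 4 - 16 * m * δ ^ 3
        + (18 * m ^ 2 - 36 * m + 12 * s * m - 12 * s + 18) * δ ^ 2
        + (-12 * m ^ 3 - 6 * s * m ^ 2 + 24 * m ^ 2 - 12 * m + 6 * s * m) * δ
        - 4 * m ^ 4 - 2 * s * m ^ 3 + 16 * m ^ 3
        - 24 * m ^ 2 + 6 * s * m ^ 2 - 6 * s * m + 16 * m - 4 + 2 * s := funext hTl'
    rw [this]; continuity
  -- existence of a root in (0, m]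
  obtain ⟨c, hc, hfc⟩ := intermediate_value_Icc hmpos.le hcont.continuousOn
      (Set.mem_Icc.mpr ⟨h0.le, hvm.le⟩)
  have hcpos : 0 < c := by
    rcases hc with ⟨hc0, _⟩
    rcases lt_or_eq_of_le hc0 with h | h
    · exact h
    · exfalso; rw [← h] at hfc; linarith [h0, hfc.le, hfc.ge]
  -- uniqueness
  have huniq : ∀ x y : ℝ, 0 < x → Tl' x = 0 → 0 < y → Tl' y = 0 → x = y := by
    intro x y hx hfx hy hfy
    by_contra hne
    wlog hxy : x < y generalizing x y
    · exact this y x hy hfy hx hfx (Ne.symm hne) (by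
        rcases lt_trichotomy x y with h | h | h
        · exact absurd h hxy
        · exact absurd h hne
        · exact h)
    have hid : (y - x) * Tl' 0
        = x * y * (y - x) * (30 * (x ^ 2 + x * y + y ^ 2) - 16 * m * (x + y)
            + (18 * m ^ 2 - 36 * m + 12 * s * m - 12 * s + 18))
          + y * Tl' x - x * Tl' y := by
      rw [hTl' 0, hTl' x, hTl' y]; ring
    rw [hfx, hfy] at hid
    simp only [mul_zero, add_zero, sub_zero] at hid
    have hQ := Tl'_aux_Q_pos m s x y hm hs1 hx hxy
    have h1 : 0 < x * y * (y - x) := mul_pos (mul_pos hx hy) (sub_pos.mpr hxy)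
    have h2 : (y - x) * Tl' 0 < 0 := mul_neg_of_pos_of_neg (sub_pos.mpr hxy) h0
    linarith [mul_pos h1 hQ]
  refine ⟨⟨c, ⟨hcpos, hfc⟩, ?_⟩, h0⟩
  rintro y ⟨hy, hfy⟩
  exact huniq y c hy hfy hcpos hfc
end

section
/- Let n, δ, l be integers with 2 ≤ δ ≤ n − 3 and 1 ≤ l ≤ δ − 1. Then l·f(n−1, n−2) − l·f(n−1, δ) − (δ − l)·f(n−2, δ) < 0, i.e., l·f(n−1,n−2) < l·f(n−1,δ) + (δ−l)·f(n−2,δ). -/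
/-! Moving `b` towards `0` enlarges the numerator of `f a b` and shrinks its denominator,
so `f (n-1) (n-2) < f (n-1) δ`; the extra term `(δ - l) f (n-2) δ` is nonnegative. -/

lemma f_nonneg (a b : ℝ) : 0 ≤ f a b := by
  unfold f
  positivity

lemma f_lt_f_of_sq_lt {a b c : ℝ} (hcb : c ^ 2 < b ^ 2) (hba : b ^ 2 ≤ a ^ 2) :
    f a b < f a c := by
  unfold f
  rw [abs_of_nonneg (sub_nonneg.2 hba), abs_of_nonneg (by linarith : 0 ≤ a ^ 2 - c ^ 2)]
  refine div_lt_div₀ (by linarith) ?_ (by linarith) (by positivity)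
  gcongr

theorem f_combination_lt_general (n δ l : ℕ) (hδn : δ + 3 ≤ n)
    (hl : 1 ≤ l) (hlδ : l + 1 ≤ δ) :
    (l : ℝ) * f ((n : ℝ) - 1) ((n : ℝ) - 2) <
      (l : ℝ) * f ((n : ℝ) - 1) (δ : ℝ) + ((δ : ℝ) - (l : ℝ)) * f ((n : ℝ) - 2) (δ : ℝ) := by
  have hn : (δ : ℝ) + 3 ≤ n := by exact_mod_cast hδn
  have hl_pos : (0 : ℝ) < l := by exact_mod_cast hl
  have hl_le : (l : ℝ) ≤ δ := by exact_mod_cast (by omega : l ≤ δ)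
  have hδ_nonneg : (0 : ℝ) ≤ δ := δ.cast_nonneg
  have h_f_lt : f ((n : ℝ) - 1) ((n : ℝ) - 2) < f ((n : ℝ) - 1) δ :=
    f_lt_f_of_sq_lt (by nlinarith) (by nlinarith)
  calc (l : ℝ) * f ((n : ℝ) - 1) ((n : ℝ) - 2) < l * f ((n : ℝ) - 1) δ := by gcongr
    _ ≤ _ := le_add_of_nonneg_right (mul_nonneg (sub_nonneg.2 hl_le) (f_nonneg _ _))

/-- For integers `2 ≤ δ ≤ n − 3` and `1 ≤ l ≤ δ − 1`,
`l·f(n−1,n−2) < l·f(n−1,δ) + (δ−l)·f(n−2,δ)`. -/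
theorem f_combination_lt (n δ l : ℕ) (hδ : 2 ≤ δ) (hδn : δ + 3 ≤ n)
    (hl : 1 ≤ l) (hlδ : l + 1 ≤ δ) :
    (l : ℝ) * f ((n : ℝ) - 1) ((n : ℝ) - 2) <
      (l : ℝ) * f ((n : ℝ) - 1) (δ : ℝ) + ((δ : ℝ) - (l : ℝ)) * f ((n : ℝ) - 2) (δ : ℝ) :=
  f_combination_lt_general n δ l hδn hl hlδ
end

section
/- Let n ≥ 3 be an integer and define T_u(δ) = 6δ⁵ − 4nδ⁴ + (6n² − 4n − 2)δ³ + (−6n³ + 6n²)δ² + (−4n⁴ + 12n³ − 12n² + 4n)δ + 2n⁵ − 6n⁴ + 6n³ − 2n². Then T_u(c₀n) < 0, T_u(c₀n − 1/2) > 0, and T_u(n−1) = −8n⁴ + 28n³ − 36n² + 20n − 4 < 0. -/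
set_option maxHeartbeats 1000000 in
/-- For `n ≥ 3`, the upper-bound polynomial `T_u` satisfies `T_u(c₀n) < 0`,
`T_u(c₀n − 1/2) > 0` and `T_u(n−1) = −8n⁴ + 28n³ − 36n² + 20n − 4 < 0`, where `c₀` is the
unique root in `(0,1)` of `6c⁵ − 4c⁴ + 6c³ − 6c² − 4c + 2 = 0`. -/
theorem Tu_sign_values (n : ℕ) (hn : 3 ≤ n)
    (c₀ : ℝ) (hc₀ : c₀ ∈ Set.Ioo (0 : ℝ) 1)
    (hroot : 6 * c₀ ^ 5 - 4 * c₀ ^ 4 + 6 * c₀ ^ 3 - 6 * c₀ ^ 2 - 4 * c₀ + 2 = 0)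
    (Tu : ℝ → ℝ)
    (hTu : ∀ δ : ℝ, Tu δ =
      6 * δ ^ 5 - 4 * (n : ℝ) * δ ^ 4 + (6 * (n : ℝ) ^ 2 - 4 * (n : ℝ) - 2) * δ ^ 3
        + (-6 * (n : ℝ) ^ 3 + 6 * (n : ℝ) ^ 2) * δ ^ 2
        + (-4 * (n : ℝ) ^ 4 + 12 * (n : ℝ) ^ 3 - 12 * (n : ℝ) ^ 2 + 4 * (n : ℝ)) * δ
        + 2 * (n : ℝ) ^ 5 - 6 * (n : ℝ) ^ 4 + 6 * (n : ℝ) ^ 3 - 2 * (n : ℝ) ^ 2) :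
    Tu (c₀ * n) < 0 ∧ Tu (c₀ * n - 1 / 2) > 0 ∧
    (Tu ((n : ℝ) - 1) =
        -8 * (n : ℝ) ^ 4 + 28 * (n : ℝ) ^ 3 - 36 * (n : ℝ) ^ 2 + 20 * (n : ℝ) - 4 ∧
      Tu ((n : ℝ) - 1) < 0) := by
  obtain ⟨hc0, hc1⟩ := hc₀
  have hN3 : (3 : ℝ) ≤ (n : ℝ) := by exact_mod_cast hn
  set N : ℝ := (n : ℝ) with hNdef
  have hNpos : (0 : ℝ) < N := by linarith
  -- power comparison facts
  have h2 : (0:ℝ) < N ^ 2 := by positivity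
  have h3 : (0:ℝ) < N ^ 3 := by positivity
  have h4 : (0:ℝ) < N ^ 4 := by positivity
  have p43 : 3 * N ^ 3 ≤ N ^ 4 := by nlinarith
  have p32 : 3 * N ^ 2 ≤ N ^ 3 := by nlinarith
  have p21 : 3 * N ≤ N ^ 2 := by nlinarith
  -- factor out (c₀ - 1): the quartic factor vanishes at c₀
  have hfac : 2 * (c₀ - 1) * (3 * c₀ ^ 4 + c₀ ^ 3 + 4 * c₀ ^ 2 + c₀ - 1) = 0 := by
    linear_combination hroot
  have hQ : 3 * c₀ ^ 4 + c₀ ^ 3 + 4 * c₀ ^ 2 + c₀ - 1 = 0 := by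
    rcases mul_eq_zero.mp hfac with h | h
    · rcases mul_eq_zero.mp h with h' | h'
      · norm_num at h'
      · exfalso; have hlt : c₀ - 1 < 0 := by linarith
        rw [h'] at hlt; norm_num at hlt
    · exact h
  -- numeric bounds on c₀
  have hlo : (0.365 : ℝ) < c₀ := by
    by_contra hcon
    push_neg at hcon
    have e2 := pow_le_pow_left₀ hc0.le hcon 2
    have e3 := pow_le_pow_left₀ hc0.le hcon 3
    have e4 := pow_le_pow_left₀ hc0.le hcon 4
    norm_num at e2 e3 e4
    linarith
  have hhi : c₀ < (0.37 : ℝ) := by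
    by_contra hcon
    push_neg at hcon
    have e2 := pow_le_pow_left₀ (by norm_num : (0:ℝ) ≤ 0.37) hcon 2
    have e3 := pow_le_pow_left₀ (by norm_num : (0:ℝ) ≤ 0.37) hcon 3
    have e4 := pow_le_pow_left₀ (by norm_num : (0:ℝ) ≤ 0.37) hcon 4
    norm_num at e2 e3 e4
    linarith
  refine ⟨?_, ?_, ?_, ?_⟩
  · -- Tu (c₀ * N) < 0
    have key : Tu (c₀ * N) =
        (-4 * c₀ ^ 3 + 6 * c₀ ^ 2 + 12 * c₀ - 6) * N ^ 4
          + (-2 * c₀ ^ 3 - 12 * c₀ + 6) * N ^ 3 + (4 * c₀ - 2) * N ^ 2 := by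
      rw [hTu]; linear_combination N ^ 5 * hroot
    rw [key]
    have hA : -4 * c₀ ^ 3 + 6 * c₀ ^ 2 + 12 * c₀ - 6 < -0.9 := by nlinarith
    have hB : -2 * c₀ ^ 3 - 12 * c₀ + 6 < 1.7 := by nlinarith
    have hC : 4 * c₀ - 2 < 0 := by linarith
    have mA := mul_lt_mul_of_pos_right hA h4
    have mB := mul_lt_mul_of_pos_right hB h3
    have mC := mul_lt_mul_of_pos_right hC h2
    nlinarith [mA, mB, mC, p43]
  · -- Tu (c₀ * N - 1/2) > 0
    have key : Tu (c₀ * N - 1 / 2) =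
        (-15 * c₀ ^ 4 + 4 * c₀ ^ 3 - 3 * c₀ ^ 2 + 18 * c₀ - 4) * N ^ 4
          + (13 * c₀ ^ 3 - 27 / 2 * c₀ - 3 / 2) * N ^ 3
          + (-9 / 2 * c₀ ^ 2 + 3 * c₀ + 19 / 4) * N ^ 2
          + (3 / 8 * c₀ - 7 / 4) * N + 1 / 16 := by
      rw [hTu]; linear_combination N ^ 5 * hroot
    rw [key]
    -- use hQ to replace -15c⁴ by -5+5c³+20c²+5c : coefficient equals 9c³+17c²+23c-9
    have hA : (2 : ℝ) < -15 * c₀ ^ 4 + 4 * c₀ ^ 3 - 3 * c₀ ^ 2 + 18 * c₀ - 4 := by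
      nlinarith [hQ, hlo, hhi, mul_pos hc0 hc0, sq_nonneg (c₀ - 0.365)]
    have hB : (-5.9 : ℝ) < 13 * c₀ ^ 3 - 27 / 2 * c₀ - 3 / 2 := by nlinarith
    have hC : (5 : ℝ) < -9 / 2 * c₀ ^ 2 + 3 * c₀ + 19 / 4 := by nlinarith
    have hD : (-1.7 : ℝ) < 3 / 8 * c₀ - 7 / 4 := by linarith
    have mA := mul_lt_mul_of_pos_right hA h4
    have mB := mul_lt_mul_of_pos_right hB h3
    have mC := mul_lt_mul_of_pos_right hC h2
    have mD := mul_lt_mul_of_pos_right hD hNpos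
    nlinarith [mA, mB, mC, mD, p43, p32, p21]
  · rw [hTu]; ring
  · have key : Tu (N - 1) =
        -8 * N ^ 4 + 28 * N ^ 3 - 36 * N ^ 2 + 20 * N - 4 := by rw [hTu]; ring
    rw [key]
    nlinarith [p43, p32, p21]
end

section
/- Let n ≥ 3 be an integer and define T_l(δ) = 6δ⁵ − 4nδ⁴ + (6n² − 12n + 4√2 n − 4√2 + 6)δ³ + (−6n³ − 3√2 n² + 12n² − 6n + 3√2 n)δ² + (−4n⁴ − 2√2 n³ + 16n³ − 24n² + 6√2 n² − 6√2 n + 16n − 4 + 2√2)δ + 2n⁵ − 8n⁴ + √2 n⁴ − 3√2 n³ + 12n³ − 8n² + 3√2 n² − √2 n + 2n. Then T_l(c₀n) < 0 and T_l(c₀n − 1/2) > 0. -/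
lemma quartic_neg (x A4 A3 A2 A1 : ℝ) (hx : 3 ≤ x)
    (h4 : A4 ≤ -1.05) (h3 : A3 ≤ 1.88) (h2 : A2 ≤ -1.01) (h1 : A1 ≤ 0.16) :
    A4 * x ^ 4 + A3 * x ^ 3 + A2 * x ^ 2 + A1 * x < 0 := by
  have hx0 : (0:ℝ) < x := by linarith
  nlinarith [pow_pos hx0 4, pow_pos hx0 3, pow_pos hx0 2, mul_pos (pow_pos hx0 3) (by linarith : (0:ℝ) < 1.05*x - 1.88), mul_pos hx0 hx0]

lemma quartic_pos (x B4 B3 B2 B1 B0 : ℝ) (hx : 3 ≤ x)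
    (h4 : 2.058 ≤ B4) (h3 : -6.21 ≤ B3) (h2 : 6.49 ≤ B2) (h1 : -2.72 ≤ B1) (h0 : 0.355 ≤ B0) :
    0 < B4 * x ^ 4 + B3 * x ^ 3 + B2 * x ^ 2 + B1 * x + B0 := by
  have hx0 : (0:ℝ) < x := by linarith
  nlinarith [pow_pos hx0 4, pow_pos hx0 3, pow_pos hx0 2,
    sq_nonneg (2.058*x - 3.105), mul_nonneg (mul_nonneg hx0.le hx0.le) (sq_nonneg (2.058*x - 3.105)),
    mul_nonneg hx0.le (sq_nonneg (2.058*x - 3.105)), mul_pos hx0 hx0, sq_nonneg (x-3)]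

set_option maxHeartbeats 1000000 in
/-- For `n ≥ 3`, the lower-bound polynomial `T_l` satisfies `T_l(c₀n) < 0` and
`T_l(c₀n − 1/2) > 0`, where `c₀` is the unique root in `(0,1)` of
`6c⁵ − 4c⁴ + 6c³ − 6c² − 4c + 2 = 0`. -/
theorem Tl_sign_values (n : ℕ) (hn : 3 ≤ n)
    (c₀ : ℝ) (hc₀ : c₀ ∈ Set.Ioo (0 : ℝ) 1)
    (hroot : 6 * c₀ ^ 5 - 4 * c₀ ^ 4 + 6 * c₀ ^ 3 - 6 * c₀ ^ 2 - 4 * c₀ + 2 = 0)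
    (Tl : ℝ → ℝ)
    (hTl : ∀ δ : ℝ, Tl δ =
      6 * δ ^ 5 - 4 * (n : ℝ) * δ ^ 4
        + (6 * (n : ℝ) ^ 2 - 12 * (n : ℝ) + 4 * Real.sqrt 2 * (n : ℝ)
            - 4 * Real.sqrt 2 + 6) * δ ^ 3
        + (-6 * (n : ℝ) ^ 3 - 3 * Real.sqrt 2 * (n : ℝ) ^ 2 + 12 * (n : ℝ) ^ 2
            - 6 * (n : ℝ) + 3 * Real.sqrt 2 * (n : ℝ)) * δ ^ 2
        + (-4 * (n : ℝ) ^ 4 - 2 * Real.sqrt 2 * (n : ℝ) ^ 3 + 16 * (n : ℝ) ^ 3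
            - 24 * (n : ℝ) ^ 2 + 6 * Real.sqrt 2 * (n : ℝ) ^ 2 - 6 * Real.sqrt 2 * (n : ℝ)
            + 16 * (n : ℝ) - 4 + 2 * Real.sqrt 2) * δ
        + 2 * (n : ℝ) ^ 5 - 8 * (n : ℝ) ^ 4 + Real.sqrt 2 * (n : ℝ) ^ 4
        - 3 * Real.sqrt 2 * (n : ℝ) ^ 3 + 12 * (n : ℝ) ^ 3 - 8 * (n : ℝ) ^ 2
        + 3 * Real.sqrt 2 * (n : ℝ) ^ 2 - Real.sqrt 2 * (n : ℝ) + 2 * (n : ℝ)) :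
    Tl (c₀ * n) < 0 ∧ Tl (c₀ * n - 1 / 2) > 0 := by
  obtain ⟨hc0, hc1⟩ := hc₀
  have hx : (3:ℝ) ≤ (n:ℝ) := by exact_mod_cast hn
  set s := Real.sqrt 2 with hs_def
  set x := (n : ℝ) with hx_def
  have hs2 : s ^ 2 = 2 := Real.sq_sqrt (by norm_num)
  have hsp : (0:ℝ) < s := Real.sqrt_pos.2 (by norm_num)
  have hsl : (1.414213 : ℝ) ≤ s := by nlinarith
  have hsu : s ≤ (1.414214 : ℝ) := by nlinarith
  have h1 : (c₀ - 1) * (3*c₀^4 + c₀^3 + 4*c₀^2 + c₀ - 1) = 0 := by linear_combination hroot / 2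
  have hq : 3*c₀^4 + c₀^3 + 4*c₀^2 + c₀ - 1 = 0 :=
    (mul_eq_zero.1 h1).resolve_left (sub_ne_zero.2 (ne_of_lt hc1))
  have hcl : (0.365 : ℝ) ≤ c₀ := by
    by_contra h
    push_neg at h
    nlinarith [mul_nonneg hc0.le hc0.le, mul_nonneg (mul_nonneg hc0.le hc0.le) hc0.le,
      mul_nonneg (sub_nonneg.2 h.le) hc0.le,
      mul_nonneg (mul_nonneg (sub_nonneg.2 h.le) hc0.le) hc0.le,
      mul_nonneg (mul_nonneg (mul_nonneg (sub_nonneg.2 h.le) hc0.le) hc0.le) hc0.le]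
  have hcu : c₀ ≤ (0.3651 : ℝ) := by
    by_contra h
    push_neg at h
    nlinarith [mul_nonneg hc0.le hc0.le, mul_nonneg (mul_nonneg hc0.le hc0.le) hc0.le,
      mul_nonneg (sub_nonneg.2 h.le) hc0.le,
      mul_nonneg (mul_nonneg (sub_nonneg.2 h.le) hc0.le) hc0.le,
      mul_nonneg (mul_nonneg (mul_nonneg (sub_nonneg.2 h.le) hc0.le) hc0.le) hc0.le]
  have pc1 : (0:ℝ) ≤ c₀ - 0.365 := by linarith
  have pc2 : (0:ℝ) ≤ 0.3651 - c₀ := by linarith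
  have ps1 : (0:ℝ) ≤ s - 1.414213 := by linarith
  have ps2 : (0:ℝ) ≤ 1.414214 - s := by linarith
  -- monomial bounds
  have hc2l : (0.133225:ℝ) ≤ c₀^2 := by nlinarith [mul_nonneg pc1 pc1]
  have hc2u : c₀^2 ≤ (0.133299:ℝ) := by nlinarith [mul_nonneg pc2 hc0.le]
  have hc3l : (0.048627:ℝ) ≤ c₀^3 := by nlinarith [mul_nonneg pc1 (by linarith : (0:ℝ) ≤ c₀^2 - 0.133225)]
  have hc3u : c₀^3 ≤ (0.048673:ℝ) := by nlinarith [mul_nonneg pc2 (by linarith : (0:ℝ) ≤ c₀^2 - 0.133225)]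
  have hcsl : (0.516187:ℝ) ≤ c₀*s := by nlinarith [mul_nonneg pc1 ps1]
  have hcsu : c₀*s ≤ (0.516330:ℝ) := by nlinarith [mul_nonneg pc2 ps1]
  have hc2sl : (0.188408:ℝ) ≤ c₀^2*s := by
    nlinarith [mul_nonneg (by linarith : (0:ℝ) ≤ c₀^2 - 0.133225) ps1]
  have hc2su : c₀^2*s ≤ (0.188514:ℝ) := by
    nlinarith [mul_nonneg (by linarith : (0:ℝ) ≤ 0.133299 - c₀^2) ps1]
  have hc3sl : (0.068769:ℝ) ≤ c₀^3*s := by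
    nlinarith [mul_nonneg (by linarith : (0:ℝ) ≤ c₀^3 - 0.048627) ps1]
  have hc3su : c₀^3*s ≤ (0.068835:ℝ) := by
    nlinarith [mul_nonneg (by linarith : (0:ℝ) ≤ 0.048673 - c₀^3) ps1]
  constructor
  · have e1 : Tl (c₀ * x) =
        (4*c₀^3*s + (-12)*c₀^3 + (-3)*(c₀^2*s) + 12*c₀^2 + (-2)*(c₀*s) + 16*c₀ + s + (-8)) * x^4
        + ((-4)*(c₀^3*s) + 6*c₀^3 + 3*(c₀^2*s) + (-6)*c₀^2 + 6*(c₀*s) + (-24)*c₀ + (-3)*s + 12) * x^3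
        + ((-6)*(c₀*s) + 16*c₀ + 3*s + (-8)) * x^2
        + (2*(c₀*s) + (-4)*c₀ + (-1)*s + 2) * x := by
      rw [hTl]
      linear_combination (2*x^5*c₀ - 2*x^5) * hq
    rw [e1]
    apply quartic_neg _ _ _ _ _ hx
    · linarith
    · linarith
    · linarith
    · linarith
  · have e2 : Tl (c₀ * x - 1/2) =
        (4*(c₀^3*s) + c₀^3 + (-3)*(c₀^2*s) + 23*c₀^2 + (-2)*(c₀*s) + 27*c₀ + s + (-11)) * x^4
        + ((-4)*(c₀^3*s) + 21*c₀^3 + (-3)*(c₀^2*s) + 6*c₀^2 + 9*(c₀*s) + (-63/2)*c₀ + (-2)*s + 5/2) * x^3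
        + (6*(c₀^2*s) + (-33/2)*c₀^2 + (-6)*(c₀*s) + 15*c₀ + (-3/4)*s + 25/4) * x^2
        + ((-1)*(c₀*s) + (19/8)*c₀ + (9/4)*s + (-25/4)) * x
        + ((-1/2)*s + 17/16) := by
      rw [hTl]
      linear_combination (2*x^5*c₀ - 2*x^5 - 5*x^4) * hq
    rw [e2]
    apply quartic_pos _ _ _ _ _ _ hx
    · linarith
    · linarith
    · linarith
    · linarith
    · linarith
end
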